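/- arXiv:1905.13588 — 9 statements merged into one kernel-verified Lean document; each statement's English description precedes it below -/
import Mathlib

section
/- Let n ≥ 1, A, B ⊆ {1,…,n−1}, Q ⊆ {0,…,n−1} with Q nonempty, fix q₀ ∈ Q, and set d = gcd(n, a (a ∈ A), b (b ∈ B), q − q₀ (q ∈ Q)). Then Γ_n(A,B,Q) consists of exactly d connected components, each isomorphic to Γ_{n/d}(A/d, B/d, Q'), where A/d = {a/d : a ∈ A}, B/d = {b/d : b ∈ B}, Q' = {q₀ + (q − q₀)/d : q ∈ Q}. In particular Γ_n(A,B,Q) is connected if and only if d = 1. -/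
/-- The circulant graph `circ_n(S)`: vertices `ZMod n`, with `i` adjacent to `i + s` for `s ∈ S`. -/
def circGraph (n : ℕ) (S : Finset ℕ) : SimpleGraph (ZMod n) :=
  SimpleGraph.fromRel (fun i j => ∃ s ∈ S, j = i + (s : ZMod n))

/-- The graph `Γ_n(A,B,Q)` with vertices `v_i = Sum.inl i`, `v'_i = Sum.inr i`, and edges
`(v_i, v_{i+a})` for `a ∈ A`, `(v'_i, v'_{i+b})` for `b ∈ B`, `(v_i, v'_{i+q})` for `q ∈ Q`. -/
def Gamma (n : ℕ) (A B Q : Finset ℕ) : SimpleGraph (ZMod n ⊕ ZMod n) :=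
  SimpleGraph.fromRel (fun x y =>
    match x, y with
    | Sum.inl i, Sum.inl j => ∃ a ∈ A, j = i + (a : ZMod n)
    | Sum.inr i, Sum.inr j => ∃ b ∈ B, j = i + (b : ZMod n)
    | Sum.inl i, Sum.inr j => ∃ q ∈ Q, j = i + (q : ZMod n)
    | Sum.inr _, Sum.inl _ => False)

/-- `H` is a minor of `G`: there are disjoint connected branch sets in `G`, one for each
vertex of `H`, such that adjacent vertices of `H` have adjacent branch sets. -/
def SimpleGraph.IsMinorOf {W V : Type*} (H : SimpleGraph W) (G : SimpleGraph V) : Prop :=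
  ∃ f : V → Option W,
    (∀ w : W, (G.induce {v | f v = some w}).Connected) ∧
    (∀ w₁ w₂ : W, H.Adj w₁ w₂ →
      ∃ v₁ v₂, f v₁ = some w₁ ∧ f v₂ = some w₂ ∧ G.Adj v₁ v₂)

/-- A graph is planar iff it has no `K₅` minor and no `K_{3,3}` minor (Wagner's theorem). -/
def SimpleGraph.Planar {V : Type*} (G : SimpleGraph V) : Prop :=
  ¬ (⊤ : SimpleGraph (Fin 5)).IsMinorOf G ∧
  ¬ (completeBipartiteGraph (Fin 3) (Fin 3)).IsMinorOf G

/-- `Γ_n(A,B,Q)` is properly given: `a₁ ≢ ±a₂ (mod n)` for distinct `a₁, a₂ ∈ A`,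
and similarly for `B`. -/
def ProperlyGiven (n : ℕ) (A B : Finset ℕ) : Prop :=
  (∀ a₁ ∈ A, ∀ a₂ ∈ A, a₁ ≠ a₂ →
    (a₁ : ZMod n) ≠ (a₂ : ZMod n) ∧ (a₁ : ZMod n) ≠ -(a₂ : ZMod n)) ∧
  (∀ b₁ ∈ B, ∀ b₂ ∈ B, b₁ ≠ b₂ →
    (b₁ : ZMod n) ≠ (b₂ : ZMod n) ∧ (b₁ : ZMod n) ≠ -(b₂ : ZMod n))

/-- `circ_n(S)` is properly given: `s ≢ ±t (mod n)` for distinct `s, t ∈ S`. -/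
def ProperlyGivenS (n : ℕ) (S : Finset ℕ) : Prop :=
  ∀ s ∈ S, ∀ t ∈ S, s ≠ t →
    (s : ZMod n) ≠ (t : ZMod n) ∧ (s : ZMod n) ≠ -(t : ZMod n)

/-- A permutation is regular of order `n`: all its cycles have length exactly `n`
(for `n = 1` this means the identity). -/
def IsRegularOfOrder {α : Type*} (f : Equiv.Perm α) (n : ℕ) : Prop :=
  f ^ n = 1 ∧ ∀ x : α, ∀ k : ℕ, 0 < k → k < n → (f ^ k) x ≠ x

open Sum SimpleGraph

lemma gamma_adj_ll (n : ℕ) (A B Q : Finset ℕ) (i j : ZMod n) :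
    (Gamma n A B Q).Adj (inl i) (inl j) ↔
      i ≠ j ∧ ((∃ a ∈ A, j = i + (a : ZMod n)) ∨ (∃ a ∈ A, i = j + (a : ZMod n))) := by
  rw [Gamma, SimpleGraph.fromRel_adj]; simp

lemma gamma_adj_rr (n : ℕ) (A B Q : Finset ℕ) (i j : ZMod n) :
    (Gamma n A B Q).Adj (inr i) (inr j) ↔
      i ≠ j ∧ ((∃ b ∈ B, j = i + (b : ZMod n)) ∨ (∃ b ∈ B, i = j + (b : ZMod n))) := by
  rw [Gamma, SimpleGraph.fromRel_adj]; simp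

lemma gamma_adj_lr (n : ℕ) (A B Q : Finset ℕ) (i j : ZMod n) :
    (Gamma n A B Q).Adj (inl i) (inr j) ↔ ∃ q ∈ Q, j = i + (q : ZMod n) := by
  rw [Gamma, SimpleGraph.fromRel_adj]; simp

lemma gamma_adj_rl (n : ℕ) (A B Q : Finset ℕ) (i j : ZMod n) :
    (Gamma n A B Q).Adj (inr i) (inl j) ↔ ∃ q ∈ Q, i = j + (q : ZMod n) := by
  rw [Gamma, SimpleGraph.fromRel_adj]; simp

theorem stmt1 (n : ℕ) (hn : 1 ≤ n) (A B Q : Finset ℕ)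
    (hA : A ⊆ Finset.Ico 1 n) (hB : B ⊆ Finset.Ico 1 n) (hQ : Q ⊆ Finset.range n)
    (q₀ : ℕ) (hq₀ : q₀ ∈ Q) (d : ℕ)
    (hd : d = Nat.gcd (Nat.gcd n (Nat.gcd (A.gcd id) (B.gcd id)))
              (Q.gcd (fun q => (q + n - q₀) % n))) :
    Nat.card (Gamma n A B Q).ConnectedComponent = d ∧
    (∀ c : (Gamma n A B Q).ConnectedComponent,
      Nonempty (((Gamma n A B Q).induce c.supp) ≃g
        Gamma (n / d) (A.image (· / d)) (B.image (· / d))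
          (Q.image (fun q => q₀ + ((q + n - q₀) % n) / d)))) ∧
    ((Gamma n A B Q).Connected ↔ d = 1) := by
  classical
  haveI : NeZero n := ⟨by omega⟩
  -- divisibility facts
  have hdn : d ∣ n := by
    rw [hd]; exact dvd_trans (Nat.gcd_dvd_left _ _) (Nat.gcd_dvd_left _ _)
  have hdA : ∀ a ∈ A, d ∣ a := by
    intro a ha
    rw [hd]
    exact dvd_trans (dvd_trans (Nat.gcd_dvd_left _ _)
      (dvd_trans (Nat.gcd_dvd_right _ _) (Nat.gcd_dvd_left _ _))) (Finset.gcd_dvd ha)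
  have hdB : ∀ b ∈ B, d ∣ b := by
    intro b hb
    rw [hd]
    exact dvd_trans (dvd_trans (Nat.gcd_dvd_left _ _)
      (dvd_trans (Nat.gcd_dvd_right _ _) (Nat.gcd_dvd_right _ _))) (Finset.gcd_dvd hb)
  have hdQ : ∀ q ∈ Q, d ∣ (q + n - q₀) % n := by
    intro q hq
    rw [hd]
    exact dvd_trans (Nat.gcd_dvd_right _ _) (Finset.gcd_dvd hq)
  have hd0 : 0 < d := Nat.pos_of_dvd_of_pos hdn (by omega)
  haveI : NeZero d := ⟨by omega⟩
  set m := n / d with hmdef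
  have hnm : d * m = n := Nat.mul_div_cancel' hdn
  have hm0 : 0 < m := Nat.div_pos (Nat.le_of_dvd (by omega) hdn) hd0
  haveI : NeZero m := ⟨by omega⟩
  have hq₀n : q₀ < n := Finset.mem_range.mp (hQ hq₀)
  -- the colouring
  set cast' : ZMod n →+* ZMod d := ZMod.castHom hdn (ZMod d) with hcastdef
  set col : ZMod n ⊕ ZMod n → ZMod d :=
    Sum.elim (fun i => cast' i) (fun j => cast' j - (q₀ : ZMod d)) with hcoldef
  have hcast'_val : ∀ x : ZMod n, cast' x = ((x.val : ℕ) : ZMod d) := by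
    intro x; rw [ZMod.castHom_apply, ← ZMod.natCast_val]
  have hmodcast : ∀ x : ℕ, ((x % n : ℕ) : ZMod d) = (x : ZMod d) := by
    intro x
    conv_rhs => rw [← Nat.mod_add_div x n]
    push_cast
    rw [(ZMod.natCast_eq_zero_iff n d).2 hdn]
    ring
  have hcastA : ∀ a ∈ A, (a : ZMod d) = 0 :=
    fun a ha => (ZMod.natCast_eq_zero_iff a d).2 (hdA a ha)
  have hcastB : ∀ b ∈ B, (b : ZMod d) = 0 :=
    fun b hb => (ZMod.natCast_eq_zero_iff b d).2 (hdB b hb)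
  have hcastQ : ∀ q ∈ Q, (q : ZMod d) = (q₀ : ZMod d) := by
    intro q hq
    have h1 : (((q + n - q₀) % n : ℕ) : ZMod d) = 0 :=
      (ZMod.natCast_eq_zero_iff _ d).2 (hdQ q hq)
    rw [hmodcast] at h1
    have hle : q₀ ≤ q + n := by omega
    rw [Nat.cast_sub hle] at h1
    push_cast at h1
    rw [(ZMod.natCast_eq_zero_iff n d).2 hdn] at h1
    have : (q : ZMod d) - q₀ = 0 := by linear_combination h1
    linear_combination this
  -- basic adjacencies
  have adjA : ∀ a ∈ A, ∀ i : ZMod n, (Gamma n A B Q).Adj (inl i) (inl (i + (a : ZMod n))) := by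
    intro a ha i
    have hmem := hA ha
    rw [Finset.mem_Ico] at hmem
    have h0 : (a : ZMod n) ≠ 0 := by
      intro h
      have := (ZMod.natCast_eq_zero_iff a n).1 h
      have := Nat.le_of_dvd (by omega) this
      omega
    rw [gamma_adj_ll]
    exact ⟨fun h => h0 (by rwa [left_eq_add] at h), Or.inl ⟨a, ha, rfl⟩⟩
  have adjB : ∀ b ∈ B, ∀ i : ZMod n, (Gamma n A B Q).Adj (inr i) (inr (i + (b : ZMod n))) := by
    intro b hb i
    have hmem := hB hb
    rw [Finset.mem_Ico] at hmem
    have h0 : (b : ZMod n) ≠ 0 := by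
      intro h
      have := (ZMod.natCast_eq_zero_iff b n).1 h
      have := Nat.le_of_dvd (by omega) this
      omega
    rw [gamma_adj_rr]
    exact ⟨fun h => h0 (by rwa [left_eq_add] at h), Or.inl ⟨b, hb, rfl⟩⟩
  have adjQ : ∀ q ∈ Q, ∀ i : ZMod n, (Gamma n A B Q).Adj (inl i) (inr (i + (q : ZMod n))) := by
    intro q hq i
    rw [gamma_adj_lr]
    exact ⟨q, hq, rfl⟩
  -- colour is preserved by adjacency
  have hcol_adj : ∀ x y, (Gamma n A B Q).Adj x y → col x = col y := by
    have key : ∀ i j : ZMod n,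
        ((∃ a ∈ A, j = i + (a : ZMod n)) → cast' i = cast' j) ∧
        ((∃ b ∈ B, j = i + (b : ZMod n)) → cast' i = cast' j) ∧
        ((∃ q ∈ Q, j = i + (q : ZMod n)) → cast' j - q₀ = cast' i) := by
      intro i j
      refine ⟨?_, ?_, ?_⟩
      · rintro ⟨a, ha, rfl⟩
        rw [map_add, map_natCast, hcastA a ha, add_zero]
      · rintro ⟨b, hb, rfl⟩
        rw [map_add, map_natCast, hcastB b hb, add_zero]
      · rintro ⟨q, hq, rfl⟩
        rw [map_add, map_natCast, hcastQ q hq]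
        ring
    rintro (i | i) (j | j) hadj
    · rw [gamma_adj_ll] at hadj
      rcases hadj.2 with h | h
      · exact (key i j).1 h
      · exact ((key j i).1 h).symm
    · rw [gamma_adj_lr] at hadj
      exact ((key i j).2.2 hadj).symm
    · rw [gamma_adj_rl] at hadj
      exact ((key j i).2.2 hadj)
    · rw [gamma_adj_rr] at hadj
      simp only [hcoldef, Sum.elim_inr, sub_left_inj]
      rcases hadj.2 with h | h
      · exact (key i j).2.1 h
      · exact ((key j i).2.1 h).symm
  have hcol_reach : ∀ x y, (Gamma n A B Q).Reachable x y → col x = col y := by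
    intro x y h
    obtain ⟨p⟩ := h
    induction p with
    | nil => rfl
    | cons h p ih => exact (hcol_adj _ _ h).trans ih
  -- basic reachability moves
  have reach_b : ∀ b ∈ B, ∀ i : ZMod n,
      (Gamma n A B Q).Reachable (inl i) (inl (i + (b : ZMod n))) := by
    intro b hb i
    have h1 := adjQ q₀ hq₀ i
    have h2 := adjB b hb (i + (q₀ : ZMod n))
    have h3 := adjQ q₀ hq₀ (i + (b : ZMod n))
    rw [show i + (b : ZMod n) + q₀ = i + q₀ + b by ring] at h3
    exact (h1.reachable.trans h2.reachable).trans h3.symm.reachable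
  have reach_q : ∀ q ∈ Q, ∀ i : ZMod n,
      (Gamma n A B Q).Reachable (inl i) (inl (i + ((q : ZMod n) - q₀))) := by
    intro q hq i
    have h1 := adjQ q hq i
    have h2 := adjQ q₀ hq₀ (i + ((q : ZMod n) - q₀))
    rw [show i + ((q : ZMod n) - q₀) + q₀ = i + q by ring] at h2
    exact h1.reachable.trans h2.symm.reachable
  -- the subgroup of reachable translations
  set T : AddSubgroup (ZMod n) :=
    { carrier := {t | ∀ i, (Gamma n A B Q).Reachable (inl i) (inl (i + t))}
      zero_mem' := fun i => by simpa using Reachable.refl (G := Gamma n A B Q) (inl i)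
      add_mem' := by
        intro s t hs ht i
        have := (hs i).trans (ht (i + s))
        rwa [add_assoc] at this
      neg_mem' := by
        intro t ht i
        have := ht (i + -t)
        rw [show i + -t + t = i by ring] at this
        exact this.symm } with hTdef
  have hmemT : ∀ t : ZMod n, t ∈ T ↔ ∀ i, (Gamma n A B Q).Reachable (inl i) (inl (i + t)) :=
    fun t => Iff.rfl
  have hdT : ((d : ℕ) : ZMod n) ∈ T := by
    set T' : AddSubgroup ℤ := T.comap (Int.castRingHom (ZMod n)).toAddMonoidHom with hT'def
    have hmemT' : ∀ x : ℤ, x ∈ T' ↔ ((x : ZMod n) ∈ T) := fun _ => Iff.rfl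
    obtain ⟨g, hg⟩ := Int.subgroup_cyclic T'
    have hmem : ∀ x : ℤ, x ∈ T' ↔ g ∣ x := by
      intro x
      rw [hg, ← AddSubgroup.zmultiples_eq_closure, Int.mem_zmultiples_iff]
    have hgn : g ∣ (n : ℤ) := by
      rw [← hmem, hmemT']
      intro i
      simp only [Int.cast_natCast, ZMod.natCast_self, add_zero]
      exact Reachable.refl _
    have hgA : ∀ a ∈ A, g ∣ (a : ℤ) := by
      intro a ha
      rw [← hmem, hmemT']
      intro i
      simpa using (adjA a ha i).reachable
    have hgB : ∀ b ∈ B, g ∣ (b : ℤ) := by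
      intro b hb
      rw [← hmem, hmemT']
      intro i
      simpa using reach_b b hb i
    have hgQ : ∀ q ∈ Q, g ∣ (((q + n - q₀) % n : ℕ) : ℤ) := by
      intro q hq
      rw [← hmem, hmemT']
      intro i
      have hle : q₀ ≤ q + n := by omega
      have hcast : ((((q + n - q₀) % n : ℕ) : ℤ) : ZMod n) = (q : ZMod n) - q₀ := by
        rw [Int.cast_natCast, ZMod.natCast_mod, Nat.cast_sub hle]
        push_cast
        rw [ZMod.natCast_self]
        ring
      rw [hcast]
      exact reach_q q hq i
    have hgd : g.natAbs ∣ d := by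
      rw [hd]
      refine Nat.dvd_gcd (Nat.dvd_gcd ?_ (Nat.dvd_gcd ?_ ?_)) ?_
      · simpa using Int.natAbs_dvd_natAbs.2 hgn
      · exact Finset.dvd_gcd fun a ha => by simpa using Int.natAbs_dvd_natAbs.2 (hgA a ha)
      · exact Finset.dvd_gcd fun b hb => by simpa using Int.natAbs_dvd_natAbs.2 (hgB b hb)
      · refine Finset.dvd_gcd fun q hq => ?_
        have h := Int.natAbs_dvd_natAbs.2 (hgQ q hq)
        rwa [Int.natAbs_natCast] at h
    have hgd' : g ∣ (d : ℤ) :=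
      dvd_trans (Int.natAbs_dvd.1 (dvd_refl _)) (Int.natCast_dvd_natCast.2 hgd)
    have := (hmem (d : ℤ)).2 hgd'
    rw [hmemT'] at this
    simpa using this
  have hmulT : ∀ k : ℕ, ((d * k : ℕ) : ZMod n) ∈ T := by
    intro k
    have : ((d * k : ℕ) : ZMod n) = k • ((d : ℕ) : ZMod n) := by
      push_cast
      rw [nsmul_eq_mul]
      ring
    rw [this]
    exact AddSubgroup.nsmul_mem T hdT k
  have reach_of_col : ∀ i j : ZMod n, cast' i = cast' j →
      (Gamma n A B Q).Reachable (inl i) (inl j) := by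
    intro i j hij
    have h0 : cast' (j - i) = 0 := by rw [map_sub, hij, sub_self]
    have hdvd : d ∣ (j - i).val := by
      rw [hcast'_val] at h0
      exact (ZMod.natCast_eq_zero_iff _ _).1 h0
    have hji : j - i = ((d * ((j - i).val / d) : ℕ) : ZMod n) := by
      rw [Nat.mul_div_cancel' hdvd, ZMod.natCast_val, ZMod.cast_id]
    have hT : (j - i) ∈ T := by rw [hji]; exact hmulT _
    have := hT i
    rwa [add_sub_cancel] at this
  have reach_inr : ∀ j : ZMod n,
      (Gamma n A B Q).Reachable (inr j) (inl (j - (q₀ : ZMod n))) := by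
    intro j
    have h := adjQ q₀ hq₀ (j - (q₀ : ZMod n))
    rw [sub_add_cancel] at h
    exact h.symm.reachable
  have col_inr : ∀ j : ZMod n, col (inr j) = col (inl (j - (q₀ : ZMod n))) := by
    intro j
    simp only [hcoldef, Sum.elim_inr, Sum.elim_inl, map_sub, map_natCast]
  have reach_of_col_all : ∀ x y, col x = col y → (Gamma n A B Q).Reachable x y := by
    intro x y h
    rcases x with i | i <;> rcases y with j | j
    · exact reach_of_col _ _ h
    · rw [col_inr] at h
      exact (reach_of_col _ _ h).trans (reach_inr j).symm
    · rw [col_inr] at h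
      exact (reach_inr i).trans (reach_of_col _ _ h)
    · rw [col_inr i, col_inr j] at h
      exact ((reach_inr i).trans (reach_of_col _ _ h)).trans (reach_inr j).symm
  -- the component count
  set colc : (Gamma n A B Q).ConnectedComponent → ZMod d :=
    ConnectedComponent.lift col (fun v w p _ => hcol_reach v w p.reachable) with hcolcdef
  have hcolc_bij : Function.Bijective colc := by
    constructor
    · refine ConnectedComponent.ind₂ ?_
      intro v w h
      exact ConnectedComponent.sound (reach_of_col_all v w h)
    · intro r
      refine ⟨(Gamma n A B Q).connectedComponentMk (inl ((r.val : ℕ) : ZMod n)), ?_⟩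
      simp only [hcolcdef, ConnectedComponent.lift_mk, hcoldef, Sum.elim_inl, map_natCast]
      rw [ZMod.natCast_val, ZMod.cast_id]
  have hcard : Nat.card ((Gamma n A B Q).ConnectedComponent) = d := by
    rw [Nat.card_congr (Equiv.ofBijective colc hcolc_bij), Nat.card_zmod]
  have hsupp : ∀ c : (Gamma n A B Q).ConnectedComponent, c.supp = {x | col x = colc c} := by
    intro c
    ext x
    rw [ConnectedComponent.mem_supp_iff]
    constructor
    · rintro rfl
      rfl
    · intro h
      obtain ⟨v, rfl⟩ := c.exists_rep
      exact ConnectedComponent.sound (reach_of_col_all x v h)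
  -- the per-colour isomorphism
  have comp_iso : ∀ r : ZMod d,
      Nonempty (((Gamma n A B Q).induce {x | col x = r}) ≃g
        Gamma m (A.image (· / d)) (B.image (· / d))
          (Q.image (fun q => q₀ + ((q + n - q₀) % n) / d))) := by
    intro r
    set f : ℕ → ℕ := fun q => q₀ + ((q + n - q₀) % n) / d with hfdef
    set ι : ZMod m → ZMod n := fun k => ((r.val + d * k.val : ℕ) : ZMod n) with hιdef
    have hcast_dmul : ∀ x y : ℕ, x % m = y % m →
        ((d * x : ℕ) : ZMod n) = ((d * y : ℕ) : ZMod n) := by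
      intro x y h
      rw [ZMod.natCast_eq_natCast_iff, ← hnm]
      exact Nat.ModEq.mul_left' d h
    have ι_add : ∀ (k : ZMod m) (s : ℕ),
        ι (k + (s : ZMod m)) = ι k + ((d * s : ℕ) : ZMod n) := by
      intro k s
      have h1 : (k + (s : ZMod m)).val % m = (k.val + s) % m := by
        rw [ZMod.val_add, ZMod.val_natCast, Nat.mod_mod_of_dvd _ dvd_rfl, Nat.add_mod_mod]
      have h2 : ((d * (k + (s : ZMod m)).val : ℕ) : ZMod n)
          = ((d * (k.val + s) : ℕ) : ZMod n) := hcast_dmul _ _ (by rw [h1])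
      show ((r.val + d * (k + (s : ZMod m)).val : ℕ) : ZMod n) = _
      push_cast
      push_cast at h2
      rw [h2]
      show _ = ((r.val + d * k.val : ℕ) : ZMod n) + _
      push_cast
      ring
    have ι_inj : Function.Injective ι := by
      intro k k' h
      rw [ZMod.natCast_eq_natCast_iff, ← hnm] at h
      have h2 := Nat.ModEq.mul_left_cancel' (by omega : d ≠ 0) (Nat.ModEq.add_left_cancel' r.val h)
      have h3 : k.val % m = k'.val % m := h2
      rw [Nat.mod_eq_of_lt (ZMod.val_lt _), Nat.mod_eq_of_lt (ZMod.val_lt _)] at h3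
      exact ZMod.val_injective m h3
    have ι_col : ∀ k, cast' (ι k) = r := by
      intro k
      show cast' ((r.val + d * k.val : ℕ) : ZMod n) = r
      rw [map_natCast]
      push_cast
      rw [ZMod.natCast_self]
      simp [ZMod.natCast_val, ZMod.cast_id]
    have ι_surj : ∀ i : ZMod n, cast' i = r → ∃ k, ι k = i := by
      intro i hi
      refine ⟨((i.val / d : ℕ) : ZMod m), ?_⟩
      have h1 : ((i.val / d : ℕ) : ZMod m).val % m = (i.val / d) % m := by
        rw [ZMod.val_natCast]
        exact Nat.mod_mod_of_dvd _ dvd_rfl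
      have h2 : r.val = i.val % d := by
        have : (i.val : ZMod d) = r := by rw [← hcast'_val]; exact hi
        rw [← this, ZMod.val_natCast]
      have h3 : ((d * ((i.val / d : ℕ) : ZMod m).val : ℕ) : ZMod n)
          = ((d * (i.val / d) : ℕ) : ZMod n) := hcast_dmul _ _ h1
      show ((r.val + d * ((i.val / d : ℕ) : ZMod m).val : ℕ) : ZMod n) = i
      push_cast
      push_cast at h3
      rw [h3, h2]
      have h4 : (i.val % d : ℕ) + (d * (i.val / d) : ℕ) = i.val := Nat.mod_add_div _ _
      rw [show ((i.val % d : ℕ) : ZMod n) + ((d : ℕ) : ZMod n) * ((i.val / d : ℕ) : ZMod n)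
          = (((i.val % d) + d * (i.val / d) : ℕ) : ZMod n) by push_cast; ring, h4,
        ZMod.natCast_val, ZMod.cast_id]
    set ι' : ZMod m → ZMod n := fun k => ι (k - (q₀ : ZMod m)) + (q₀ : ZMod n) with hι'def
    have ι'_inj : Function.Injective ι' := by
      intro k k' h
      have h1 : ι (k - (q₀ : ZMod m)) = ι (k' - (q₀ : ZMod m)) := by
        have h' : ι (k - (q₀ : ZMod m)) + (q₀ : ZMod n)
            = ι (k' - (q₀ : ZMod m)) + (q₀ : ZMod n) := h
        exact add_right_cancel h'
      have := ι_inj h1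
      linear_combination this
    have ι'_col : ∀ k, cast' (ι' k) = r + (q₀ : ZMod d) := by
      intro k
      show cast' (ι (k - (q₀ : ZMod m)) + (q₀ : ZMod n)) = _
      rw [map_add, ι_col, map_natCast]
    have key_a : ∀ (k k' : ZMod m) (a : ℕ), d ∣ a →
        (ι k' = ι k + (a : ZMod n) ↔ k' = k + ((a / d : ℕ) : ZMod m)) := by
      intro k k' a hda
      constructor
      · intro h
        apply ι_inj
        rw [ι_add, Nat.mul_div_cancel' hda, h]
      · rintro rfl
        rw [ι_add, Nat.mul_div_cancel' hda]
    have key_b : ∀ (k k' : ZMod m) (b : ℕ), d ∣ b →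
        (ι' k' = ι' k + (b : ZMod n) ↔ k' = k + ((b / d : ℕ) : ZMod m)) := by
      intro k k' b hdb
      have h1 : (ι' k' = ι' k + (b : ZMod n)) ↔
          (ι (k' - (q₀ : ZMod m)) = ι (k - (q₀ : ZMod m)) + (b : ZMod n)) := by
        simp only [hι'def]
        constructor <;> intro h <;> linear_combination h
      rw [h1, key_a _ _ b hdb]
      constructor <;> intro h <;> linear_combination h
    have key_q : ∀ (k k' : ZMod m) (q : ℕ), q ∈ Q →
        (ι' k' = ι k + (q : ZMod n) ↔ k' = k + ((f q : ℕ) : ZMod m)) := by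
      intro k k' q hq
      have hle : q₀ ≤ q + n := by omega
      have heq : ι' (k + ((f q : ℕ) : ZMod m)) = ι k + (q : ZMod n) := by
        have h0 : k + ((f q : ℕ) : ZMod m) - (q₀ : ZMod m)
            = k + ((((q + n - q₀) % n) / d : ℕ) : ZMod m) := by
          simp only [hfdef]
          push_cast
          ring
        show ι (k + ((f q : ℕ) : ZMod m) - (q₀ : ZMod m)) + (q₀ : ZMod n) = _
        rw [h0, ι_add, Nat.mul_div_cancel' (hdQ q hq), ZMod.natCast_mod, Nat.cast_sub hle]
        push_cast
        rw [ZMod.natCast_self]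
        ring
      constructor
      · intro h
        exact ι'_inj (h.trans heq.symm)
      · rintro rfl
        exact heq
    have exA : ∀ k k' : ZMod m, (∃ a ∈ A, ι k' = ι k + (a : ZMod n)) ↔
        (∃ a' ∈ A.image (· / d), k' = k + (a' : ZMod m)) := by
      intro k k'
      constructor
      · rintro ⟨a, ha, h⟩
        exact ⟨a / d, Finset.mem_image_of_mem _ ha, (key_a k k' a (hdA a ha)).1 h⟩
      · rintro ⟨a', ha', h⟩
        obtain ⟨a, ha, rfl⟩ := Finset.mem_image.1 ha'
        exact ⟨a, ha, (key_a k k' a (hdA a ha)).2 h⟩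
    have exB : ∀ k k' : ZMod m, (∃ b ∈ B, ι' k' = ι' k + (b : ZMod n)) ↔
        (∃ b' ∈ B.image (· / d), k' = k + (b' : ZMod m)) := by
      intro k k'
      constructor
      · rintro ⟨b, hb, h⟩
        exact ⟨b / d, Finset.mem_image_of_mem _ hb, (key_b k k' b (hdB b hb)).1 h⟩
      · rintro ⟨b', hb', h⟩
        obtain ⟨b, hb, rfl⟩ := Finset.mem_image.1 hb'
        exact ⟨b, hb, (key_b k k' b (hdB b hb)).2 h⟩
    have exQ : ∀ k k' : ZMod m, (∃ q ∈ Q, ι' k' = ι k + (q : ZMod n)) ↔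
        (∃ q' ∈ Q.image f, k' = k + (q' : ZMod m)) := by
      intro k k'
      constructor
      · rintro ⟨q, hq, h⟩
        exact ⟨f q, Finset.mem_image_of_mem _ hq, (key_q k k' q hq).1 h⟩
      · rintro ⟨q', hq', h⟩
        obtain ⟨q, hq, rfl⟩ := Finset.mem_image.1 hq'
        exact ⟨q, hq, (key_q k k' q hq).2 h⟩
    set Gmap : ZMod m ⊕ ZMod m → ZMod n ⊕ ZMod n :=
      Sum.elim (fun k => inl (ι k)) (fun k => inr (ι' k)) with hGmapdef
    have hGmap_col : ∀ z, col (Gmap z) = r := by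
      rintro (k | k)
      · exact ι_col k
      · show cast' (ι' k) - (q₀ : ZMod d) = r
        rw [ι'_col]
        ring
    have hGmap_inj : Function.Injective Gmap := by
      rintro (k | k) (k' | k') h <;> simp only [hGmapdef, Sum.elim_inl, Sum.elim_inr,
        inl.injEq, inr.injEq] at h
      · exact congrArg inl (ι_inj h)
      · exact absurd h (by simp)
      · exact absurd h (by simp)
      · exact congrArg inr (ι'_inj h)
    have hGmap_surj : ∀ x : ZMod n ⊕ ZMod n, col x = r → ∃ z, Gmap z = x := by
      rintro (i | j) h
      · obtain ⟨k, hk⟩ := ι_surj i h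
        exact ⟨inl k, congrArg inl hk⟩
      · have h2 : cast' (j - (q₀ : ZMod n)) = r := by
          rw [map_sub, map_natCast]
          have h' : cast' j - (q₀ : ZMod d) = r := h
          linear_combination h'
        obtain ⟨k, hk⟩ := ι_surj (j - (q₀ : ZMod n)) h2
        refine ⟨inr (k + (q₀ : ZMod m)), ?_⟩
        show inr (ι (k + (q₀ : ZMod m) - (q₀ : ZMod m)) + (q₀ : ZMod n)) = inr j
        rw [add_sub_cancel_right, hk, sub_add_cancel]
    have hGmap_adj : ∀ z w, (Gamma n A B Q).Adj (Gmap z) (Gmap w) ↔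
        (Gamma m (A.image (· / d)) (B.image (· / d)) (Q.image f)).Adj z w := by
      rintro (k | k) (k' | k')
      · show (Gamma n A B Q).Adj (inl (ι k)) (inl (ι k')) ↔ _
        rw [gamma_adj_ll, gamma_adj_ll]
        exact and_congr ι_inj.ne_iff (or_congr (exA k k') (exA k' k))
      · show (Gamma n A B Q).Adj (inl (ι k)) (inr (ι' k')) ↔ _
        rw [gamma_adj_lr, gamma_adj_lr]
        exact exQ k k'
      · show (Gamma n A B Q).Adj (inr (ι' k)) (inl (ι k')) ↔ _
        rw [gamma_adj_rl, gamma_adj_rl]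
        exact exQ k' k
      · show (Gamma n A B Q).Adj (inr (ι' k)) (inr (ι' k')) ↔ _
        rw [gamma_adj_rr, gamma_adj_rr]
        exact and_congr ι'_inj.ne_iff (or_congr (exB k k') (exB k' k))
    have hbij : Function.Bijective
        (fun z => (⟨Gmap z, hGmap_col z⟩ : {x | col x = r})) := by
      constructor
      · intro z w h
        exact hGmap_inj (congrArg Subtype.val h)
      · rintro ⟨x, hx⟩
        obtain ⟨z, hz⟩ := hGmap_surj x hx
        exact ⟨z, Subtype.ext hz⟩
    refine ⟨SimpleGraph.Iso.symm ⟨Equiv.ofBijective _ hbij, ?_⟩⟩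
    intro z w
    simp only [Equiv.ofBijective_apply, comap_adj, Function.Embedding.coe_subtype]
    exact hGmap_adj z w
  refine ⟨hcard, ?_, ?_⟩
  · intro c
    rw [hsupp c]
    exact comp_iso (colc c)
  · constructor
    · intro hconn
      have hsub := hconn.preconnected.subsingleton_connectedComponent
      have h1 : Nat.card ((Gamma n A B Q).ConnectedComponent) = 1 :=
        Nat.card_eq_one_iff_unique.2 ⟨hsub, ⟨(Gamma n A B Q).connectedComponentMk (inl 0)⟩⟩
      omega
    · intro hd1
      subst hd1
      rw [connected_iff]
      exact ⟨fun x y => reach_of_col_all x y (Subsingleton.elim _ _), ⟨inl 0⟩⟩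
end

section
/- Let n ≥ 4 be odd. Then the graph Γ_n(∅, ∅, {0, 1, n−1}) is non-planar. (Equivalently, it is isomorphic to the circulant graph circ_{2n}({1, n}), which is non-planar.) -/
set_option maxHeartbeats 1000000

lemma isMinorOf_of_iso {W V V' : Type*} {H : SimpleGraph W} {G : SimpleGraph V}
    {G' : SimpleGraph V'} (h : H.IsMinorOf G) (e : G ≃g G') : H.IsMinorOf G' := by
  obtain ⟨f, hconn, hadj⟩ := h
  refine ⟨fun v => f (e.symm v), fun w => ?_, fun w₁ w₂ hw => ?_⟩
  · have iso : (G.induce {v | f v = some w}) ≃g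
        (G'.induce {v | f (e.symm v) = some w}) := by
      refine ⟨Equiv.subtypeEquiv e.toEquiv (fun v => by simp), fun {a b} => ?_⟩
      exact e.map_rel_iff
    exact (hconn w).map iso.toHom iso.toEquiv.surjective
  · obtain ⟨v₁, v₂, h₁, h₂, hA⟩ := hadj w₁ w₂ hw
    exact ⟨e v₁, e v₂, by simp [h₁], by simp [h₂], e.map_rel_iff.mpr hA⟩

lemma interval_conn {N : ℕ} (G : SimpleGraph (ZMod N)) (hadj : ∀ x : ZMod N, G.Adj x (x + 1))
    (a b : ℕ) (hab : a ≤ b) (hb : b < N) :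
    (G.induce {x : ZMod N | a ≤ x.val ∧ x.val ≤ b}).Connected := by
  haveI : NeZero N := ⟨by omega⟩
  have hmem : ∀ k : ℕ, a ≤ k → k ≤ b → ((k : ZMod N) ∈ {x : ZMod N | a ≤ x.val ∧ x.val ≤ b}) := by
    intro k h1 h2
    have hv : ((k : ZMod N)).val = k := ZMod.val_cast_of_lt (by omega)
    exact ⟨by omega, by omega⟩
  have key : ∀ (k : ℕ) (h1 : a ≤ k) (h2 : k ≤ b),
      (G.induce {x : ZMod N | a ≤ x.val ∧ x.val ≤ b}).Reachable
        ⟨(a : ZMod N), hmem a le_rfl hab⟩ ⟨(k : ZMod N), hmem k h1 h2⟩ := by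
    intro k h1 h2
    induction k, h1 using Nat.le_induction with
    | base => exact SimpleGraph.Reachable.refl _
    | succ k hk ih =>
      refine (ih (by omega)).trans (SimpleGraph.Adj.reachable ?_)
      show G.Adj ((k : ZMod N)) ((k + 1 : ℕ) : ZMod N)
      have : ((k + 1 : ℕ) : ZMod N) = (k : ZMod N) + 1 := by push_cast; ring
      rw [this]
      exact hadj _
  haveI : Nonempty {x : ZMod N | a ≤ x.val ∧ x.val ≤ b} := ⟨⟨(a : ZMod N), hmem a le_rfl hab⟩⟩
  refine ⟨fun u v => ?_⟩
  have hu : (⟨((u.1.val : ℕ) : ZMod N), hmem _ u.2.1 u.2.2⟩ :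
      {x : ZMod N | a ≤ x.val ∧ x.val ≤ b}) = u := Subtype.ext (ZMod.natCast_rightInverse u.1)
  have hv : (⟨((v.1.val : ℕ) : ZMod N), hmem _ v.2.1 v.2.2⟩ :
      {x : ZMod N | a ≤ x.val ∧ x.val ≤ b}) = v := Subtype.ext (ZMod.natCast_rightInverse v.1)
  have r1 := key u.1.val u.2.1 u.2.2
  have r2 := key v.1.val v.2.1 v.2.2
  rw [hu] at r1; rw [hv] at r2
  exact r1.symm.trans r2

lemma circ_adj (n : ℕ) (x y : ZMod (2 * n))
    (h : y = x + 1 ∨ y = x + ((n : ℕ) : ZMod (2 * n)) ∨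
         x = y + 1 ∨ x = y + ((n : ℕ) : ZMod (2 * n)))
    (hne : x ≠ y) : (circGraph (2 * n) {1, n}).Adj x y := by
  rw [circGraph, SimpleGraph.fromRel_adj]
  refine ⟨hne, ?_⟩
  rcases h with h | h | h | h
  · exact Or.inl ⟨1, by simp, by rw [Nat.cast_one]; exact h⟩
  · exact Or.inl ⟨n, by simp, h⟩
  · exact Or.inr ⟨1, by simp, by rw [Nat.cast_one]; exact h⟩
  · exact Or.inr ⟨n, by simp, h⟩

def bfun (n : ℕ) (x : ZMod (2 * n)) : Option (Fin 3 ⊕ Fin 3) :=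
  if x.val = 0 then some (.inl 0)
  else if x.val = 1 then some (.inr 0)
  else if x.val ≤ n - 1 then some (.inl 1)
  else if x.val = n then some (.inr 1)
  else if x.val = n + 1 then some (.inl 2)
  else some (.inr 2)

lemma k33_minor (n : ℕ) (hn : 4 ≤ n) :
    (completeBipartiteGraph (Fin 3) (Fin 3)).IsMinorOf (circGraph (2 * n) {1, n}) := by
  haveI : NeZero (2 * n) := ⟨by omega⟩
  have hvlt : ∀ x : ZMod (2 * n), x.val < 2 * n := fun x => ZMod.val_lt x
  have hval : ∀ c : ℕ, c < 2 * n → ((c : ZMod (2 * n))).val = c :=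
    fun c h => ZMod.val_cast_of_lt h
  have hadj1 : ∀ x : ZMod (2 * n), (circGraph (2 * n) {1, n}).Adj x (x + 1) := by
    intro x
    refine circ_adj n x (x + 1) (Or.inl rfl) fun h => ?_
    have h1 : (1 : ZMod (2 * n)) = 0 := by
      have := congrArg (· - x) h
      simpa using this.symm
    haveI : Fact (1 < 2 * n) := ⟨by omega⟩
    exact one_ne_zero h1
  have hne : ∀ c d : ℕ, c < 2 * n → d < 2 * n → c ≠ d →
      ((c : ZMod (2 * n)) ≠ (d : ZMod (2 * n))) := by
    intro c d hc hd hcd heq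
    exact hcd (by rw [← hval c hc, ← hval d hd, heq])
  have hcast : ∀ c s d : ℕ, c + s = d → ((d : ZMod (2 * n)) = (c : ZMod (2 * n)) + s) := by
    intro c s d h; subst h; push_cast; ring
  have hcast1 : ∀ c d : ℕ, c + 1 = d → ((d : ZMod (2 * n)) = (c : ZMod (2 * n)) + 1) := by
    intro c d h
    have := hcast c 1 d h
    rwa [Nat.cast_one] at this
  have h0 : ((0 : ℕ) : ZMod (2 * n)) = ((2 * n - 1 : ℕ) : ZMod (2 * n)) + 1 := by
    have := hcast1 (2 * n - 1) (2 * n) (by omega)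
    rw [ZMod.natCast_self] at this
    rw [Nat.cast_zero, this]
  refine ⟨bfun n, ?_, ?_⟩
  · intro w
    have hseteq : ∀ (a b : ℕ), a ≤ b → b < 2 * n →
        (∀ v : ZMod (2 * n), bfun n v = some w ↔ (a ≤ v.val ∧ v.val ≤ b)) →
        (SimpleGraph.induce {v | bfun n v = some w} (circGraph (2 * n) {1, n})).Connected := by
      intro a b hab hb hiff
      have hs : {v | bfun n v = some w} = {x : ZMod (2 * n) | a ≤ x.val ∧ x.val ≤ b} := by
        ext v; exact hiff v
      rw [hs]
      exact interval_conn _ hadj1 a b hab hb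
    rcases w with a | a <;> fin_cases a
    · refine hseteq 0 0 le_rfl (by omega) fun v => ?_
      have hv := hvlt v; unfold bfun
      split_ifs <;> first
        | exact iff_of_true (by decide) (by omega)
        | exact iff_of_false (by decide) (by omega)
    · refine hseteq 2 (n - 1) (by omega) (by omega) fun v => ?_
      have hv := hvlt v; unfold bfun
      split_ifs <;> first
        | exact iff_of_true (by decide) (by omega)
        | exact iff_of_false (by decide) (by omega)
    · refine hseteq (n + 1) (n + 1) le_rfl (by omega) fun v => ?_
      have hv := hvlt v; unfold bfun
      split_ifs <;> first
        | exact iff_of_true (by decide) (by omega)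
        | exact iff_of_false (by decide) (by omega)
    · refine hseteq 1 1 le_rfl (by omega) fun v => ?_
      have hv := hvlt v; unfold bfun
      split_ifs <;> first
        | exact iff_of_true (by decide) (by omega)
        | exact iff_of_false (by decide) (by omega)
    · refine hseteq n n le_rfl (by omega) fun v => ?_
      have hv := hvlt v; unfold bfun
      split_ifs <;> first
        | exact iff_of_true (by decide) (by omega)
        | exact iff_of_false (by decide) (by omega)
    · refine hseteq (n + 2) (2 * n - 1) (by omega) (by omega) fun v => ?_
      have hv := hvlt v; unfold bfun
      split_ifs <;> first
        | exact iff_of_true (by decide) (by omega)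
        | exact iff_of_false (by decide) (by omega)
  · have hbf : ∀ c : ℕ, c < 2 * n → ∀ w : Fin 3 ⊕ Fin 3,
        ((if c = 0 then some (Sum.inl (0 : Fin 3))
          else if c = 1 then some (Sum.inr (0 : Fin 3))
          else if c ≤ n - 1 then some (Sum.inl (1 : Fin 3))
          else if c = n then some (Sum.inr (1 : Fin 3))
          else if c = n + 1 then some (Sum.inl (2 : Fin 3))
          else some (Sum.inr (2 : Fin 3))) = some w) → bfun n ((c : ZMod (2 * n))) = some w := by
      intro c hc w h
      unfold bfun
      rw [hval c hc]
      exact h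
    have main : ∀ a b : Fin 3, ∃ v₁ v₂, bfun n v₁ = some (.inl a) ∧ bfun n v₂ = some (.inr b) ∧
        (circGraph (2 * n) {1, n}).Adj v₁ v₂ := by
      intro a b
      fin_cases a <;> fin_cases b
      · exact ⟨((0:ℕ) : ZMod (2*n)), ((1:ℕ) : ZMod (2*n)),
          hbf 0 (by omega) (Sum.inl (0:Fin 3)) (by split_ifs <;> first | decide | (exfalso; omega) | exact (‹False›).elim),
          hbf 1 (by omega) (Sum.inr (0:Fin 3)) (by split_ifs <;> first | decide | (exfalso; omega) | exact (‹False›).elim),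
          circ_adj n _ _ (Or.inl (hcast1 0 1 rfl)) (hne 0 1 (by omega) (by omega) (by omega))⟩
      · exact ⟨((0:ℕ) : ZMod (2*n)), ((n:ℕ) : ZMod (2*n)),
          hbf 0 (by omega) (Sum.inl (0:Fin 3)) (by split_ifs <;> first | decide | (exfalso; omega) | exact (‹False›).elim),
          hbf n (by omega) (Sum.inr (1:Fin 3)) (by split_ifs <;> first | decide | (exfalso; omega) | exact (‹False›).elim),
          circ_adj n _ _ (Or.inr (Or.inl (hcast 0 n n (by omega)))) (hne 0 n (by omega) (by omega) (by omega))⟩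
      · exact ⟨((0:ℕ) : ZMod (2*n)), ((2*n-1:ℕ) : ZMod (2*n)),
          hbf 0 (by omega) (Sum.inl (0:Fin 3)) (by split_ifs <;> first | decide | (exfalso; omega) | exact (‹False›).elim),
          hbf (2*n-1) (by omega) (Sum.inr (2:Fin 3)) (by split_ifs <;> first | decide | (exfalso; omega) | exact (‹False›).elim),
          circ_adj n _ _ (Or.inr (Or.inr (Or.inl h0))) (hne 0 (2*n-1) (by omega) (by omega) (by omega))⟩
      · exact ⟨((2:ℕ) : ZMod (2*n)), ((1:ℕ) : ZMod (2*n)),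
          hbf 2 (by omega) (Sum.inl (1:Fin 3)) (by split_ifs <;> first | decide | (exfalso; omega) | exact (‹False›).elim),
          hbf 1 (by omega) (Sum.inr (0:Fin 3)) (by split_ifs <;> first | decide | (exfalso; omega) | exact (‹False›).elim),
          circ_adj n _ _ (Or.inr (Or.inr (Or.inl (hcast1 1 2 rfl)))) (hne 2 1 (by omega) (by omega) (by omega))⟩
      · exact ⟨((n-1:ℕ) : ZMod (2*n)), ((n:ℕ) : ZMod (2*n)),
          hbf (n-1) (by omega) (Sum.inl (1:Fin 3)) (by split_ifs <;> first | decide | (exfalso; omega) | exact (‹False›).elim),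
          hbf n (by omega) (Sum.inr (1:Fin 3)) (by split_ifs <;> first | decide | (exfalso; omega) | exact (‹False›).elim),
          circ_adj n _ _ (Or.inl (hcast1 (n-1) n (by omega))) (hne (n-1) n (by omega) (by omega) (by omega))⟩
      · exact ⟨((2:ℕ) : ZMod (2*n)), ((n+2:ℕ) : ZMod (2*n)),
          hbf 2 (by omega) (Sum.inl (1:Fin 3)) (by split_ifs <;> first | decide | (exfalso; omega) | exact (‹False›).elim),
          hbf (n+2) (by omega) (Sum.inr (2:Fin 3)) (by split_ifs <;> first | decide | (exfalso; omega) | exact (‹False›).elim),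
          circ_adj n _ _ (Or.inr (Or.inl (hcast 2 n (n+2) (by omega)))) (hne 2 (n+2) (by omega) (by omega) (by omega))⟩
      · exact ⟨((n+1:ℕ) : ZMod (2*n)), ((1:ℕ) : ZMod (2*n)),
          hbf (n+1) (by omega) (Sum.inl (2:Fin 3)) (by split_ifs <;> first | decide | (exfalso; omega) | exact (‹False›).elim),
          hbf 1 (by omega) (Sum.inr (0:Fin 3)) (by split_ifs <;> first | decide | (exfalso; omega) | exact (‹False›).elim),
          circ_adj n _ _ (Or.inr (Or.inr (Or.inr (hcast 1 n (n+1) (by omega))))) (hne (n+1) 1 (by omega) (by omega) (by omega))⟩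
      · exact ⟨((n+1:ℕ) : ZMod (2*n)), ((n:ℕ) : ZMod (2*n)),
          hbf (n+1) (by omega) (Sum.inl (2:Fin 3)) (by split_ifs <;> first | decide | (exfalso; omega) | exact (‹False›).elim),
          hbf n (by omega) (Sum.inr (1:Fin 3)) (by split_ifs <;> first | decide | (exfalso; omega) | exact (‹False›).elim),
          circ_adj n _ _ (Or.inr (Or.inr (Or.inl (hcast1 n (n+1) rfl)))) (hne (n+1) n (by omega) (by omega) (by omega))⟩
      · exact ⟨((n+1:ℕ) : ZMod (2*n)), ((n+2:ℕ) : ZMod (2*n)),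
          hbf (n+1) (by omega) (Sum.inl (2:Fin 3)) (by split_ifs <;> first | decide | (exfalso; omega) | exact (‹False›).elim),
          hbf (n+2) (by omega) (Sum.inr (2:Fin 3)) (by split_ifs <;> first | decide | (exfalso; omega) | exact (‹False›).elim),
          circ_adj n _ _ (Or.inl (hcast1 (n+1) (n+2) rfl)) (hne (n+1) (n+2) (by omega) (by omega) (by omega))⟩
    intro w₁ w₂ hadj
    rcases w₁ with a | a <;> rcases w₂ with b | b
    · simp [completeBipartiteGraph] at hadj
    · exact main a b
    · obtain ⟨v₁, v₂, h₁, h₂, h₃⟩ := main b a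
      exact ⟨v₂, v₁, h₂, h₁, h₃.symm⟩
    · simp [completeBipartiteGraph] at hadj

lemma gamma_iso (n : ℕ) (hn : 4 ≤ n) (hodd : Odd n) :
    Nonempty (Gamma n ∅ ∅ {0, 1, n - 1} ≃g circGraph (2 * n) {1, n}) := by
  haveI : NeZero n := ⟨by omega⟩
  haveI : NeZero (2 * n) := ⟨by omega⟩
  have hcop : Nat.Coprime 2 n := Nat.coprime_two_left.mpr hodd
  let crt : ZMod (2 * n) ≃+* ZMod 2 × ZMod n := ZMod.chineseRemainder hcop
  have h2 : ∀ a : ZMod 2, a = 0 ∨ a = 1 := by decide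
  let e₁ : (ZMod n ⊕ ZMod n) ≃ (ZMod 2 × ZMod n) :=
    { toFun := Sum.elim (fun i => ((0 : ZMod 2), i)) (fun i => ((1 : ZMod 2), i))
      invFun := fun p => if p.1 = 0 then Sum.inl p.2 else Sum.inr p.2
      left_inv := by
        rintro (i | i)
        · simp
        · simp [one_ne_zero]
      right_inv := by
        rintro ⟨a, b⟩
        rcases h2 a with rfl | rfl
        · simp
        · simp [one_ne_zero] }
  let E : (ZMod n ⊕ ZMod n) ≃ ZMod (2 * n) := e₁.trans crt.toEquiv.symm
  have hE : ∀ z, crt (E z) = e₁ z := fun z => crt.apply_symm_apply (e₁ z)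
  have hn2 : ((n : ℕ) : ZMod 2) = 1 := by
    obtain ⟨k, rfl⟩ := hodd
    push_cast
    have h2' : (2 : ZMod 2) = 0 := by decide
    rw [h2']
    ring
  have hnn : ((n : ℕ) : ZMod n) = 0 := ZMod.natCast_self n
  have hn1 : ((n - 1 : ℕ) : ZMod n) = -1 := by
    rw [Nat.cast_sub (by omega : 1 ≤ n), ZMod.natCast_self, Nat.cast_one]
    ring
  have master : ∀ (u v : ZMod (2 * n)) (s : ℕ),
      (v = u + ((s : ℕ) : ZMod (2 * n))) ↔ (crt v = crt u + ((s : ZMod 2), (s : ZMod n))) := by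
    intro u v s
    have h1 : crt (((s : ℕ) : ZMod (2 * n))) = ((s : ZMod 2), (s : ZMod n)) := by
      have h := map_natCast crt s
      rw [h]
      refine Prod.ext ?_ ?_ <;> simp
    constructor
    · intro h; rw [h, map_add, h1]
    · intro h
      apply crt.injective
      rw [map_add, h1, h]
  have hkey : ∀ (z w : ZMod n ⊕ ZMod n) (s : ℕ),
      (E w = E z + ((s : ℕ) : ZMod (2 * n))) ↔
        ((e₁ w).1 = (e₁ z).1 + (s : ZMod 2) ∧ (e₁ w).2 = (e₁ z).2 + (s : ZMod n)) := by
    intro z w s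
    rw [master, hE, hE, Prod.ext_iff]
    simp [Prod.fst_add, Prod.snd_add]
  have hkey1 : ∀ z w : ZMod n ⊕ ZMod n, (E w = E z + 1) ↔
      ((e₁ w).1 = (e₁ z).1 + 1 ∧ (e₁ w).2 = (e₁ z).2 + 1) := by
    intro z w
    have h := hkey z w 1
    simp only [Nat.cast_one] at h
    exact h
  have hkeyn : ∀ z w : ZMod n ⊕ ZMod n, (E w = E z + ((n : ℕ) : ZMod (2 * n))) ↔
      ((e₁ w).1 = (e₁ z).1 + 1 ∧ (e₁ w).2 = (e₁ z).2) := by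
    intro z w
    have h := hkey z w n
    rw [hn2, hnn, add_zero] at h
    exact h
  have hEne : ∀ (z w : ZMod n ⊕ ZMod n), z ≠ w → E z ≠ E w := fun z w h => E.injective.ne h
  refine ⟨⟨E, ?_⟩⟩
  intro x y
  show (circGraph (2 * n) {1, n}).Adj (E x) (E y) ↔ (Gamma n ∅ ∅ {0, 1, n - 1}).Adj x y
  rw [circGraph, Gamma, SimpleGraph.fromRel_adj, SimpleGraph.fromRel_adj]
  rcases x with i | i <;> rcases y with j | j <;>
    simp only [Finset.mem_insert, Finset.mem_singleton, Finset.notMem_empty, false_and,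
      exists_false, exists_eq_or_imp, exists_eq_left, Nat.cast_one, Nat.cast_zero, add_zero,
      hn1, or_false, false_or]
  · -- inl inl : both sides false
    constructor
    · rintro ⟨hne, h⟩
      exfalso
      have e1 : (e₁ (Sum.inl i)).1 = 0 := rfl
      have e2 : (e₁ (Sum.inl j)).1 = 0 := rfl
      rcases h with (h | h) | (h | h) <;>
        [ (have := ((hkey1 _ _).mp h).1);
          (have := ((hkeyn _ _).mp h).1);
          (have := ((hkey1 _ _).mp h).1);
          (have := ((hkeyn _ _).mp h).1)] <;>
        rw [e1, e2] at this <;> revert this <;> decide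
    · rintro ⟨hne, h⟩
      exact h.elim
  · -- inl i, inr j
    have eL1 : (e₁ (Sum.inl i)).1 = 0 := rfl
    have eL2 : (e₁ (Sum.inl i)).2 = i := rfl
    have eR1 : (e₁ (Sum.inr j)).1 = 1 := rfl
    have eR2 : (e₁ (Sum.inr j)).2 = j := rfl
    constructor
    · rintro ⟨hne, h⟩
      refine ⟨by simp, ?_⟩
      rcases h with (h | h) | (h | h)
      · have := ((hkey1 _ _).mp h).2
        rw [eL2, eR2] at this
        exact Or.inr (Or.inl this)
      · have := ((hkeyn _ _).mp h).2
        rw [eL2, eR2] at this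
        exact Or.inl this
      · have := ((hkey1 _ _).mp h).2
        rw [eL2, eR2] at this
        exact Or.inr (Or.inr (by rw [this]; ring))
      · have := ((hkeyn _ _).mp h).2
        rw [eL2, eR2] at this
        exact Or.inl this.symm
    · rintro ⟨hne, h⟩
      refine ⟨hEne _ _ (by simp), ?_⟩
      rcases h with h | h | h
      · refine Or.inl (Or.inr ?_)
        rw [hkeyn]
        rw [eL1, eL2, eR1, eR2, h]
        exact ⟨by decide, rfl⟩
      · refine Or.inl (Or.inl ?_)
        rw [hkey1]
        rw [eL1, eL2, eR1, eR2, h]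
        exact ⟨by decide, rfl⟩
      · refine Or.inr (Or.inl ?_)
        rw [hkey1]
        rw [eL1, eL2, eR1, eR2, h]
        exact ⟨by decide, by ring⟩
  · -- inr i, inl j
    have eL1 : (e₁ (Sum.inl j)).1 = 0 := rfl
    have eL2 : (e₁ (Sum.inl j)).2 = j := rfl
    have eR1 : (e₁ (Sum.inr i)).1 = 1 := rfl
    have eR2 : (e₁ (Sum.inr i)).2 = i := rfl
    constructor
    · rintro ⟨hne, h⟩
      refine ⟨by simp, ?_⟩
      rcases h with (h | h) | (h | h)
      · have := ((hkey1 _ _).mp h).2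
        rw [eL2, eR2] at this
        exact Or.inr (Or.inr (by rw [this]; ring))
      · have := ((hkeyn _ _).mp h).2
        rw [eL2, eR2] at this
        exact Or.inl this.symm
      · have := ((hkey1 _ _).mp h).2
        rw [eL2, eR2] at this
        exact Or.inr (Or.inl this)
      · have := ((hkeyn _ _).mp h).2
        rw [eL2, eR2] at this
        exact Or.inl this
    · rintro ⟨hne, h⟩
      refine ⟨hEne _ _ (by simp), ?_⟩
      rcases h with h | h | h
      · refine Or.inr (Or.inr ?_)
        rw [hkeyn]
        rw [eL1, eL2, eR1, eR2, h]
        exact ⟨by decide, rfl⟩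
      · refine Or.inr (Or.inl ?_)
        rw [hkey1]
        rw [eL1, eL2, eR1, eR2, h]
        exact ⟨by decide, rfl⟩
      · refine Or.inl (Or.inl ?_)
        rw [hkey1]
        rw [eL1, eL2, eR1, eR2, h]
        exact ⟨by decide, by ring⟩
  · -- inr inr : both sides false
    constructor
    · rintro ⟨hne, h⟩
      exfalso
      have e1 : (e₁ (Sum.inr i)).1 = 1 := rfl
      have e2 : (e₁ (Sum.inr j)).1 = 1 := rfl
      rcases h with (h | h) | (h | h) <;>
        [ (have := ((hkey1 _ _).mp h).1);
          (have := ((hkeyn _ _).mp h).1);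
          (have := ((hkey1 _ _).mp h).1);
          (have := ((hkeyn _ _).mp h).1)] <;>
        rw [e1, e2] at this <;> revert this <;> decide
    · rintro ⟨hne, h⟩
      exact h.elim

theorem stmt2 (n : ℕ) (hn : 4 ≤ n) (hodd : Odd n) :
    ¬ (Gamma n ∅ ∅ {0, 1, n - 1}).Planar ∧
    Nonempty (Gamma n ∅ ∅ {0, 1, n - 1} ≃g circGraph (2 * n) {1, n}) ∧
    ¬ (circGraph (2 * n) {1, n}).Planar := by
  have hmin := k33_minor n hn
  obtain ⟨iso⟩ := gamma_iso n hn hodd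
  exact ⟨fun hP => hP.2 (isMinorOf_of_iso hmin iso.symm), ⟨iso⟩, fun hP => hP.2 hmin⟩
end

section
/- For all n ≥ 4 the graph Γ_n({1}, {1}, {0, 1, n−1}) is non-planar. -/
namespace StmtAux

variable {n : ℕ}

/-- branch decomposition map for the K₅ minor -/
def fG (n : ℕ) : ZMod n ⊕ ZMod n → Option (Fin 5)
  | Sum.inl i => if i = 0 then some 0 else if i = 1 then some 2 else some 3
  | Sum.inr i => if i = 0 then some 1 else if i = 1 then some 2 else some 4

lemma cast_ne01 (hn : 4 ≤ n) {k : ℕ} (h2 : 2 ≤ k) (hk : k < n) :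
    ((k : ZMod n) ≠ 0) ∧ ((k : ZMod n) ≠ 1) := by
  haveI : NeZero n := ⟨by omega⟩
  haveI : Fact (1 < n) := ⟨by omega⟩
  constructor
  · intro h
    have := ZMod.val_natCast_of_lt hk
    rw [h, ZMod.val_zero] at this; omega
  · intro h
    have := ZMod.val_natCast_of_lt hk
    rw [h, ZMod.val_one] at this; omega

lemma one_ne_zero' (hn : 4 ≤ n) : (1 : ZMod n) ≠ 0 := by
  haveI : Fact (1 < n) := ⟨by omega⟩
  exact one_ne_zero

-- the specific graph
local notation "G" => Gamma n {1} {1} {0, 1, n - 1}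

lemma adj_ll (hn : 4 ≤ n) (i j : ZMod n) (h : j = i + 1) :
    (Gamma n {1} {1} {0, 1, n - 1}).Adj (Sum.inl i) (Sum.inl j) := by
  rw [Gamma, SimpleGraph.fromRel_adj]
  refine ⟨?_, Or.inl ⟨1, by simp, by simpa using h⟩⟩
  simp only [ne_eq, Sum.inl.injEq]
  intro he
  rw [← he, left_eq_add] at h
  exact one_ne_zero' hn h

lemma adj_rr (hn : 4 ≤ n) (i j : ZMod n) (h : j = i + 1) :
    (Gamma n {1} {1} {0, 1, n - 1}).Adj (Sum.inr i) (Sum.inr j) := by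
  rw [Gamma, SimpleGraph.fromRel_adj]
  refine ⟨?_, Or.inl ⟨1, by simp, by simpa using h⟩⟩
  simp only [ne_eq, Sum.inr.injEq]
  intro he
  rw [← he, left_eq_add] at h
  exact one_ne_zero' hn h

lemma adj_lr0 (i : ZMod n) :
    (Gamma n {1} {1} {0, 1, n - 1}).Adj (Sum.inl i) (Sum.inr i) := by
  rw [Gamma, SimpleGraph.fromRel_adj]
  exact ⟨by simp, Or.inl ⟨0, by simp, by simp⟩⟩

lemma adj_lr1 (i j : ZMod n) (h : j = i + 1) :
    (Gamma n {1} {1} {0, 1, n - 1}).Adj (Sum.inl i) (Sum.inr j) := by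
  rw [Gamma, SimpleGraph.fromRel_adj]
  exact ⟨by simp, Or.inl ⟨1, by simp, by simpa using h⟩⟩

lemma adj_lrm (i j : ZMod n) (h : j = i + ((n - 1 : ℕ) : ZMod n)) :
    (Gamma n {1} {1} {0, 1, n - 1}).Adj (Sum.inl i) (Sum.inr j) := by
  rw [Gamma, SimpleGraph.fromRel_adj]
  exact ⟨by simp, Or.inl ⟨n - 1, by simp, h⟩⟩

lemma hN1 (hn : 4 ≤ n) : ((n - 1 : ℕ) : ZMod n) + 1 = 0 := by
  rw [← Nat.cast_one (R := ZMod n), ← Nat.cast_add, show n - 1 + 1 = n from by omega,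
    ZMod.natCast_self]

-- fG value lemmas
lemma fG_l0 : fG n (Sum.inl 0) = some 0 := by simp [fG]
lemma fG_r0 : fG n (Sum.inr 0) = some 1 := by simp [fG]
lemma fG_l1 (hn : 4 ≤ n) : fG n (Sum.inl 1) = some 2 := by
  simp [fG, one_ne_zero' hn]
lemma fG_r1 (hn : 4 ≤ n) : fG n (Sum.inr 1) = some 2 := by
  simp [fG, one_ne_zero' hn]
lemma fG_l (hn : 4 ≤ n) {k : ℕ} (h2 : 2 ≤ k) (hk : k < n) :
    fG n (Sum.inl (k : ZMod n)) = some 3 := by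
  obtain ⟨h0, h1⟩ := cast_ne01 hn h2 hk
  simp [fG, h0, h1]
lemma fG_r (hn : 4 ≤ n) {k : ℕ} (h2 : 2 ≤ k) (hk : k < n) :
    fG n (Sum.inr (k : ZMod n)) = some 4 := by
  obtain ⟨h0, h1⟩ := cast_ne01 hn h2 hk
  simp [fG, h0, h1]

-- membership characterizations
lemma mem0 {v : ZMod n ⊕ ZMod n} (h : fG n v = some 0) : v = Sum.inl 0 := by
  rcases v with i | i <;> simp only [fG] at h <;> split_ifs at h with h0 h1 <;>
    simp_all <;> exact absurd h (by decide)

lemma mem1 {v : ZMod n ⊕ ZMod n} (h : fG n v = some 1) : v = Sum.inr 0 := by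
  rcases v with i | i <;> simp only [fG] at h <;> split_ifs at h with h0 h1 <;>
    first
      | exact absurd h (by decide)
      | (subst h0; rfl)

lemma mem2 {v : ZMod n ⊕ ZMod n} (h : fG n v = some 2) :
    v = Sum.inl 1 ∨ v = Sum.inr 1 := by
  rcases v with i | i <;> simp only [fG] at h <;> split_ifs at h with h0 h1 <;>
    first
      | exact absurd h (by decide)
      | (subst h1; simp)

lemma mem3 {v : ZMod n ⊕ ZMod n} (h : fG n v = some 3) :
    ∃ i : ZMod n, v = Sum.inl i ∧ i ≠ 0 ∧ i ≠ 1 := by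
  rcases v with i | i <;> simp only [fG] at h <;> split_ifs at h with h0 h1 <;>
    first
      | exact absurd h (by decide)
      | exact ⟨i, rfl, h0, h1⟩

lemma mem4 {v : ZMod n ⊕ ZMod n} (h : fG n v = some 4) :
    ∃ i : ZMod n, v = Sum.inr i ∧ i ≠ 0 ∧ i ≠ 1 := by
  rcases v with i | i <;> simp only [fG] at h <;> split_ifs at h with h0 h1 <;>
    first
      | exact absurd h (by decide)
      | exact ⟨i, rfl, h0, h1⟩

lemma val_bounds (hn : 4 ≤ n) {i : ZMod n} (h0 : i ≠ 0) (h1 : i ≠ 1) :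
    2 ≤ i.val ∧ i.val < n ∧ ((i.val : ℕ) : ZMod n) = i := by
  haveI : NeZero n := ⟨by omega⟩
  have hcast := ZMod.natCast_rightInverse (n := n) i
  have hlt := ZMod.val_lt i
  refine ⟨?_, hlt, hcast⟩
  by_contra hc
  interval_cases h : i.val
  · exact h0 (by rw [← hcast]; simp)
  · exact h1 (by rw [← hcast]; simp)

end StmtAux

open StmtAux in
theorem stmt3 (n : ℕ) (hn : 4 ≤ n) :
    ¬ (Gamma n {1} {1} {0, 1, n - 1}).Planar := by
  haveI : NeZero n := ⟨by omega⟩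
  rintro ⟨h5, -⟩
  apply h5
  refine ⟨fG n, ?_, ?_⟩
  · -- connectivity of branch sets
    have hind : ∀ (s : Set (ZMod n ⊕ ZMod n)) (a b : s),
        (Gamma n {1} {1} {0, 1, n - 1}).Adj a.1 b.1 →
        ((Gamma n {1} {1} {0, 1, n - 1}).induce s).Adj a b := by
      intro s a b h
      exact h
    intro w
    fin_cases w
    · -- w = 0 : {inl 0}
      show ((Gamma n {1} {1} {0, 1, n - 1}).induce {v | fG n v = some 0}).Connected
      haveI : Nonempty ({v | fG n v = some 0} : Set (ZMod n ⊕ ZMod n)) := ⟨⟨Sum.inl 0, fG_l0⟩⟩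
      refine ⟨fun a b => ?_⟩
      have ha := mem0 a.2
      have hb := mem0 b.2
      rw [show a = b from Subtype.ext (ha.trans hb.symm)]
    · -- w = 1 : {inr 0}
      show ((Gamma n {1} {1} {0, 1, n - 1}).induce {v | fG n v = some 1}).Connected
      haveI : Nonempty ({v | fG n v = some 1} : Set (ZMod n ⊕ ZMod n)) := ⟨⟨Sum.inr 0, fG_r0⟩⟩
      refine ⟨fun a b => ?_⟩
      have ha : a.1 = Sum.inr 0 := mem1 a.2
      have hb : b.1 = Sum.inr 0 := mem1 b.2
      rw [show a = b from Subtype.ext (ha.trans hb.symm)]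
    · -- w = 2 : {inl 1, inr 1}
      show ((Gamma n {1} {1} {0, 1, n - 1}).induce {v | fG n v = some 2}).Connected
      haveI : Nonempty ({v | fG n v = some 2} : Set (ZMod n ⊕ ZMod n)) := ⟨⟨Sum.inl 1, fG_l1 hn⟩⟩
      refine ⟨fun a b => ?_⟩
      have key : ∀ c : {v | fG n v = some 2},
          ((Gamma n {1} {1} {0, 1, n - 1}).induce {v | fG n v = some 2}).Reachable
            ⟨Sum.inl 1, fG_l1 hn⟩ c := by
        intro c
        rcases mem2 c.2 with h | h
        · rw [show c = ⟨Sum.inl 1, fG_l1 hn⟩ from Subtype.ext h]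
        · rw [show c = ⟨Sum.inr 1, fG_r1 hn⟩ from Subtype.ext h]
          exact SimpleGraph.Adj.reachable (hind _ ⟨Sum.inl 1, fG_l1 hn⟩
            ⟨Sum.inr 1, fG_r1 hn⟩ (adj_lr0 1))
      exact (key a).symm.trans (key b)
    · -- w = 3 : the path {inl i | i ≠ 0, 1}
      show ((Gamma n {1} {1} {0, 1, n - 1}).induce {v | fG n v = some 3}).Connected
      haveI : Nonempty ({v | fG n v = some 3} : Set (ZMod n ⊕ ZMod n)) := ⟨⟨Sum.inl ((2 : ℕ) : ZMod n), fG_l hn le_rfl (by omega)⟩⟩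
      refine ⟨fun a b => ?_⟩
      have key : ∀ k : ℕ, ∀ h2 : 2 ≤ k, ∀ hk : k < n,
          ((Gamma n {1} {1} {0, 1, n - 1}).induce {v | fG n v = some 3}).Reachable
            ⟨Sum.inl ((2 : ℕ) : ZMod n), fG_l hn le_rfl (by omega)⟩
            ⟨Sum.inl ((k : ℕ) : ZMod n), fG_l hn h2 hk⟩ := by
        intro k h2
        induction k, h2 using Nat.le_induction with
        | base => intro hk; exact SimpleGraph.Reachable.refl _
        | succ k hk ih =>
          intro hk1
          have hkn : k < n := by omega
          refine (ih hkn).trans (SimpleGraph.Adj.reachable ?_)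
          refine hind _ ⟨Sum.inl ((k : ℕ) : ZMod n), fG_l hn hk hkn⟩
            ⟨Sum.inl (((k + 1 : ℕ)) : ZMod n), fG_l hn (by omega) hk1⟩ ?_
          exact adj_ll hn _ _ (by push_cast; ring)
      have reach : ∀ c : {v | fG n v = some 3},
          ((Gamma n {1} {1} {0, 1, n - 1}).induce {v | fG n v = some 3}).Reachable
            ⟨Sum.inl ((2 : ℕ) : ZMod n), fG_l hn le_rfl (by omega)⟩ c := by
        intro c
        obtain ⟨i, hv, h0, h1⟩ := mem3 c.2
        obtain ⟨hv2, hvn, hcast⟩ := val_bounds hn h0 h1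
        have : c = ⟨Sum.inl ((i.val : ℕ) : ZMod n), fG_l hn hv2 hvn⟩ :=
          Subtype.ext (by rw [hv]; exact congrArg _ hcast.symm)
        rw [this]
        exact key i.val hv2 hvn
      exact (reach a).symm.trans (reach b)
    · -- w = 4 : the path {inr i | i ≠ 0, 1}
      show ((Gamma n {1} {1} {0, 1, n - 1}).induce {v | fG n v = some 4}).Connected
      haveI : Nonempty ({v | fG n v = some 4} : Set (ZMod n ⊕ ZMod n)) := ⟨⟨Sum.inr ((2 : ℕ) : ZMod n), fG_r hn le_rfl (by omega)⟩⟩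
      refine ⟨fun a b => ?_⟩
      have key : ∀ k : ℕ, ∀ h2 : 2 ≤ k, ∀ hk : k < n,
          ((Gamma n {1} {1} {0, 1, n - 1}).induce {v | fG n v = some 4}).Reachable
            ⟨Sum.inr ((2 : ℕ) : ZMod n), fG_r hn le_rfl (by omega)⟩
            ⟨Sum.inr ((k : ℕ) : ZMod n), fG_r hn h2 hk⟩ := by
        intro k h2
        induction k, h2 using Nat.le_induction with
        | base => intro hk; exact SimpleGraph.Reachable.refl _
        | succ k hk ih =>
          intro hk1
          have hkn : k < n := by omega
          refine (ih hkn).trans (SimpleGraph.Adj.reachable ?_)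
          refine hind _ ⟨Sum.inr ((k : ℕ) : ZMod n), fG_r hn hk hkn⟩
            ⟨Sum.inr (((k + 1 : ℕ)) : ZMod n), fG_r hn (by omega) hk1⟩ ?_
          exact adj_rr hn _ _ (by push_cast; ring)
      have reach : ∀ c : {v | fG n v = some 4},
          ((Gamma n {1} {1} {0, 1, n - 1}).induce {v | fG n v = some 4}).Reachable
            ⟨Sum.inr ((2 : ℕ) : ZMod n), fG_r hn le_rfl (by omega)⟩ c := by
        intro c
        obtain ⟨i, hv, h0, h1⟩ := mem4 c.2
        obtain ⟨hv2, hvn, hcast⟩ := val_bounds hn h0 h1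
        have : c = ⟨Sum.inr ((i.val : ℕ) : ZMod n), fG_r hn hv2 hvn⟩ :=
          Subtype.ext (by rw [hv]; exact congrArg _ hcast.symm)
        rw [this]
        exact key i.val hv2 hvn
      exact (reach a).symm.trans (reach b)
  · -- adjacency of branch sets
    intro w₁ w₂ hadj
    rw [SimpleGraph.top_adj] at hadj
    have hm1 : 2 ≤ n - 1 := by omega
    have hmn : n - 1 < n := by omega
    have e01 : (Gamma n {1} {1} {0, 1, n - 1}).Adj (Sum.inl (0 : ZMod n)) (Sum.inr 0) :=
      adj_lr0 0
    have e02 : (Gamma n {1} {1} {0, 1, n - 1}).Adj (Sum.inl (0 : ZMod n)) (Sum.inl 1) :=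
      adj_ll hn 0 1 (by ring)
    have e03 : (Gamma n {1} {1} {0, 1, n - 1}).Adj (Sum.inl (((n - 1 : ℕ)) : ZMod n))
        (Sum.inl 0) := adj_ll hn _ _ (hN1 hn).symm
    have e04 : (Gamma n {1} {1} {0, 1, n - 1}).Adj (Sum.inl (0 : ZMod n))
        (Sum.inr (((n - 1 : ℕ)) : ZMod n)) := adj_lrm 0 _ (by ring)
    have e12 : (Gamma n {1} {1} {0, 1, n - 1}).Adj (Sum.inr (0 : ZMod n)) (Sum.inr 1) :=
      adj_rr hn 0 1 (by ring)
    have e13 : (Gamma n {1} {1} {0, 1, n - 1}).Adj (Sum.inl (((n - 1 : ℕ)) : ZMod n))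
        (Sum.inr 0) := adj_lr1 _ _ (hN1 hn).symm
    have e14 : (Gamma n {1} {1} {0, 1, n - 1}).Adj (Sum.inr (((n - 1 : ℕ)) : ZMod n))
        (Sum.inr 0) := adj_rr hn _ _ (hN1 hn).symm
    have e23 : (Gamma n {1} {1} {0, 1, n - 1}).Adj (Sum.inl (1 : ZMod n))
        (Sum.inl (((2 : ℕ)) : ZMod n)) := adj_ll hn _ _ (by push_cast; ring)
    have e24 : (Gamma n {1} {1} {0, 1, n - 1}).Adj (Sum.inr (1 : ZMod n))
        (Sum.inr (((2 : ℕ)) : ZMod n)) := adj_rr hn _ _ (by push_cast; ring)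
    have e34 : (Gamma n {1} {1} {0, 1, n - 1}).Adj (Sum.inl (((2 : ℕ)) : ZMod n))
        (Sum.inr (((2 : ℕ)) : ZMod n)) := adj_lr0 _
    have f2 : fG n (Sum.inl ((2 : ℕ) : ZMod n)) = some 3 := fG_l hn le_rfl (by omega)
    have f2' : fG n (Sum.inr ((2 : ℕ) : ZMod n)) = some 4 := fG_r hn le_rfl (by omega)
    have fN : fG n (Sum.inl ((n - 1 : ℕ) : ZMod n)) = some 3 := fG_l hn hm1 hmn
    have fN' : fG n (Sum.inr ((n - 1 : ℕ) : ZMod n)) = some 4 := fG_r hn hm1 hmn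
    fin_cases w₁ <;> fin_cases w₂
    · exact absurd rfl hadj
    · exact ⟨_, _, fG_l0, fG_r0, e01⟩
    · exact ⟨_, _, fG_l0, fG_l1 hn, e02⟩
    · exact ⟨_, _, fG_l0, fN, e03.symm⟩
    · exact ⟨_, _, fG_l0, fN', e04⟩
    · exact ⟨_, _, fG_r0, fG_l0, e01.symm⟩
    · exact absurd rfl hadj
    · exact ⟨_, _, fG_r0, fG_r1 hn, e12⟩
    · exact ⟨_, _, fG_r0, fN, e13.symm⟩
    · exact ⟨_, _, fG_r0, fN', e14.symm⟩
    · exact ⟨_, _, fG_l1 hn, fG_l0, e02.symm⟩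
    · exact ⟨_, _, fG_r1 hn, fG_r0, e12.symm⟩
    · exact absurd rfl hadj
    · exact ⟨_, _, fG_l1 hn, f2, e23⟩
    · exact ⟨_, _, fG_r1 hn, f2', e24⟩
    · exact ⟨_, _, fN, fG_l0, e03⟩
    · exact ⟨_, _, fN, fG_r0, e13⟩
    · exact ⟨_, _, f2, fG_l1 hn, e23.symm⟩
    · exact absurd rfl hadj
    · exact ⟨_, _, f2, f2', e34⟩
    · exact ⟨_, _, fN', fG_l0, e04.symm⟩
    · exact ⟨_, _, fN', fG_r0, e14⟩
    · exact ⟨_, _, f2', fG_r1 hn, e24.symm⟩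
    · exact ⟨_, _, f2', f2, e34.symm⟩
    · exact absurd rfl hadj
end

section
/- For all n ≥ 4 the graph Γ_n({1}, {1}, {0, 2}) is non-planar. -/
lemma connected_of_eq_singleton {V : Type*} (G : SimpleGraph V) (S : Set V) (a : V)
    (h : S = {a}) : (G.induce S).Connected := by
  subst h
  rw [SimpleGraph.connected_iff]
  refine ⟨fun u v => ?_, ⟨⟨a, rfl⟩⟩⟩
  have : u = v := Subtype.ext (u.2.trans v.2.symm)
  exact this ▸ SimpleGraph.Reachable.refl _

/-- the branch-set function for the K33 minor -/
def myf (n : ℕ) : ZMod n ⊕ ZMod n → Option (Fin 3 ⊕ Fin 3)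
  | Sum.inl i =>
      if i = 0 then some (Sum.inl 0)
      else if i = 1 then some (Sum.inr 2)
      else if i.val ≤ n - 2 then some (Sum.inl 1)
      else none
  | Sum.inr i =>
      if i = 0 then some (Sum.inr 0)
      else if i = 1 then some (Sum.inl 2)
      else if i = 2 then some (Sum.inr 1)
      else none

theorem stmt4 (n : ℕ) (hn : 4 ≤ n) :
    ¬ (Gamma n {1} {1} {0, 2}).Planar := by
  haveI : NeZero n := ⟨by omega⟩
  set G := Gamma n {1} {1} {0, 2} with hG
  -- distinctness of small constants in ZMod n
  have hval : ∀ a : ℕ, a < n → ((a : ZMod n)).val = a := fun a h => ZMod.val_cast_of_lt h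
  have h0 : ((0:ℕ) : ZMod n) = 0 := by push_cast; ring
  have h1 : ((1:ℕ) : ZMod n) = 1 := by push_cast; ring
  have h2 : ((2:ℕ) : ZMod n) = 2 := by push_cast; ring
  have hv0 : (0 : ZMod n).val = 0 := by rw [← h0]; exact hval 0 (by omega)
  have hv1 : (1 : ZMod n).val = 1 := by rw [← h1]; exact hval 1 (by omega)
  have hv2 : (2 : ZMod n).val = 2 := by rw [← h2]; exact hval 2 (by omega)
  have hne : ∀ a b : ZMod n, a.val ≠ b.val → a ≠ b := fun a b h hab => h (by rw [hab])
  have h01 : (0 : ZMod n) ≠ 1 := hne _ _ (by omega)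
  have h02 : (0 : ZMod n) ≠ 2 := hne _ _ (by omega)
  have h12 : (1 : ZMod n) ≠ 2 := hne _ _ (by omega)
  -- characterize the branch sets
  have hS0 : {v | myf n v = some (Sum.inl 0)} = {Sum.inl (0 : ZMod n)} := by
    ext v
    rcases v with i | i <;> simp only [myf, Set.mem_setOf_eq, Set.mem_singleton_iff] <;>
      split_ifs <;> simp_all
  have hS2 : {v | myf n v = some (Sum.inl 2)} = {Sum.inr (1 : ZMod n)} := by
    ext v
    rcases v with i | i <;> simp only [myf, Set.mem_setOf_eq, Set.mem_singleton_iff] <;>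
      split_ifs <;> simp_all
  have hT0 : {v | myf n v = some (Sum.inr 0)} = {Sum.inr (0 : ZMod n)} := by
    ext v
    rcases v with i | i <;> simp only [myf, Set.mem_setOf_eq, Set.mem_singleton_iff] <;>
      split_ifs <;> simp_all
  have hT1 : {v | myf n v = some (Sum.inr 1)} = {Sum.inr (2 : ZMod n)} := by
    ext v
    rcases v with i | i <;> simp only [myf, Set.mem_setOf_eq, Set.mem_singleton_iff] <;>
      split_ifs <;> simp_all
  have hT2 : {v | myf n v = some (Sum.inr 2)} = {Sum.inl (1 : ZMod n)} := by
    ext v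
    rcases v with i | i <;> simp only [myf, Set.mem_setOf_eq, Set.mem_singleton_iff] <;>
      split_ifs <;> simp_all
  -- the arc branch set
  have hArc : ∀ v, myf n v = some (Sum.inl 1) ↔
      ∃ i : ZMod n, v = Sum.inl i ∧ 2 ≤ i.val ∧ i.val ≤ n - 2 := by
    intro v
    rcases v with i | i
    · simp only [myf]
      split_ifs with hi0 hi1 hi2
      · subst hi0; simp [hv0]
      · subst hi1; simp [hv1]
      · simp only [Option.some.injEq, Sum.inl.injEq, true_iff]
        refine ⟨i, rfl, ?_, hi2⟩
        rcases Nat.lt_or_ge i.val 2 with h | h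
        · interval_cases hv : i.val
          · exact absurd (ZMod.val_injective n (hv.trans hv0.symm)) hi0
          · exact absurd (ZMod.val_injective n (hv.trans hv1.symm)) hi1
        · exact h
      · simp only [false_iff]
        rintro ⟨j, hj, hj2, hj3⟩
        exact hi2 (by rwa [(Sum.inl.injEq .. ▸ hj : i = j)])
    · simp only [myf]
      split_ifs <;> simp
  -- membership facts
  have hmem2 : myf n (Sum.inl (2 : ZMod n)) = some (Sum.inl 1) := by
    rw [hArc]; exact ⟨2, rfl, by omega, by omega⟩
  have hmemN2 : myf n (Sum.inl ((n - 2 : ℕ) : ZMod n)) = some (Sum.inl 1) := by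
    rw [hArc]; exact ⟨_, rfl, by rw [hval _ (by omega)]; omega, by rw [hval _ (by omega)]⟩
  -- adjacency helpers
  have hmemQ2 : (2:ℕ) ∈ ({0, 2} : Finset ℕ) := by decide
  have hmemQ0 : (0:ℕ) ∈ ({0, 2} : Finset ℕ) := by decide
  have hmemA1 : (1:ℕ) ∈ ({1} : Finset ℕ) := by decide
  have hcancel : ∀ i : ZMod n, i ≠ i + 1 := by
    intro i h
    apply h01
    have : i + 0 = i + 1 := by rw [add_zero]; exact h
    exact add_left_cancel this
  have adj_ll : ∀ i : ZMod n, G.Adj (Sum.inl i) (Sum.inl (i + 1)) := by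
    intro i
    rw [hG, Gamma, SimpleGraph.fromRel_adj]
    exact ⟨by simpa using hcancel i, Or.inl ⟨1, hmemA1, by rw [h1]⟩⟩
  have adj_rr : ∀ i : ZMod n, G.Adj (Sum.inr i) (Sum.inr (i + 1)) := by
    intro i
    rw [hG, Gamma, SimpleGraph.fromRel_adj]
    exact ⟨by simpa using hcancel i, Or.inl ⟨1, hmemA1, by rw [h1]⟩⟩
  have adj_lr0 : ∀ i : ZMod n, G.Adj (Sum.inl i) (Sum.inr i) := by
    intro i
    rw [hG, Gamma, SimpleGraph.fromRel_adj]
    exact ⟨by simp, Or.inl ⟨0, hmemQ0, by rw [h0, add_zero]⟩⟩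
  have adj_lr2 : ∀ i : ZMod n, G.Adj (Sum.inl i) (Sum.inr (i + 2)) := by
    intro i
    rw [hG, Gamma, SimpleGraph.fromRel_adj]
    exact ⟨by simp, Or.inl ⟨2, hmemQ2, by rw [h2]⟩⟩
  have adjsymm : ∀ x y : ZMod n ⊕ ZMod n, G.Adj x y → G.Adj y x := fun x y h => h.symm
  -- connectivity of the arc
  have harc_conn : (G.induce {v | myf n v = some (Sum.inl 1)}).Connected := by
    set S : Set (ZMod n ⊕ ZMod n) := {v | myf n v = some (Sum.inl 1)} with hSdef
    have root_mem : Sum.inl (2 : ZMod n) ∈ S := hmem2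
    rw [SimpleGraph.connected_iff]
    constructor
    · -- every vertex reachable from root
      have key : ∀ k : ℕ, ∀ (i : ZMod n) (h : Sum.inl i ∈ S), i.val = k →
          (G.induce S).Reachable ⟨Sum.inl i, h⟩ ⟨Sum.inl 2, root_mem⟩ := by
        intro k
        induction k using Nat.strong_induction_on with
        | _ k ih =>
          intro i h hk
          obtain ⟨j, hj, hj2, hj3⟩ := (hArc (Sum.inl i)).mp h
          have hij : i = j := Sum.inl.inj hj
          subst hij
          rcases Nat.eq_or_lt_of_le hj2 with heq | hlt
          · -- i.val = 2, so i = 2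
            have : i = 2 := ZMod.val_injective n (by omega)
            subst this
            exact SimpleGraph.Reachable.refl _
          · -- i.val ≥ 3; step to i - 1
            set m : ℕ := i.val - 1 with hm
            have hmlt : m < n := by have := i.val_lt; omega
            have hjval : ((m : ZMod n)).val = m := hval m hmlt
            have hjmem : Sum.inl ((m : ZMod n)) ∈ S := by
              rw [hSdef, Set.mem_setOf_eq, hArc]
              exact ⟨_, rfl, by omega, by omega⟩
            have hstep : i = (m : ZMod n) + 1 := by
              have : ((i.val : ℕ) : ZMod n) = i := ZMod.natCast_rightInverse i
              rw [← this]
              have : i.val = m + 1 := by omega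
              rw [this]
              push_cast
              ring
            have hadj : (G.induce S).Adj ⟨Sum.inl ((m : ZMod n)), hjmem⟩ ⟨Sum.inl i, h⟩ := by
              show G.Adj (Sum.inl ((m : ZMod n))) (Sum.inl i)
              rw [hstep]
              exact adj_ll _
            exact (hadj.symm.reachable).trans (ih m (by omega) _ hjmem hjval)
      intro u v
      rcases u with ⟨x, hx⟩
      rcases v with ⟨y, hy⟩
      obtain ⟨i, hi, _, _⟩ := (hArc x).mp hx
      obtain ⟨j, hj, _, _⟩ := (hArc y).mp hy
      subst hi; subst hj
      exact (key _ _ hx rfl).trans (key _ _ hy rfl).symm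
    · exact ⟨⟨_, root_mem⟩⟩
  -- assemble the K33 minor
  rintro ⟨-, hK33⟩
  apply hK33
  refine ⟨myf n, ?_, ?_⟩
  · rintro (w | w) <;> fin_cases w
    · exact connected_of_eq_singleton _ _ _ hS0
    · exact harc_conn
    · exact connected_of_eq_singleton _ _ _ hS2
    · exact connected_of_eq_singleton _ _ _ hT0
    · exact connected_of_eq_singleton _ _ _ hT1
    · exact connected_of_eq_singleton _ _ _ hT2
  · have table : ∀ a b : Fin 3, ∃ v₁ v₂, myf n v₁ = some (Sum.inl a) ∧
        myf n v₂ = some (Sum.inr b) ∧ G.Adj v₁ v₂ := by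
      have e0 : myf n (Sum.inl (0:ZMod n)) = some (Sum.inl 0) := by
        show Sum.inl (0:ZMod n) ∈ {v | myf n v = some (Sum.inl (0:Fin 3))}
        rw [hS0]; rfl
      have e2 : myf n (Sum.inr (1:ZMod n)) = some (Sum.inl 2) := by
        show Sum.inr (1:ZMod n) ∈ {v | myf n v = some (Sum.inl (2:Fin 3))}
        rw [hS2]; rfl
      have f0 : myf n (Sum.inr (0:ZMod n)) = some (Sum.inr 0) := by
        show Sum.inr (0:ZMod n) ∈ {v | myf n v = some (Sum.inr (0:Fin 3))}
        rw [hT0]; rfl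
      have f1 : myf n (Sum.inr (2:ZMod n)) = some (Sum.inr 1) := by
        show Sum.inr (2:ZMod n) ∈ {v | myf n v = some (Sum.inr (1:Fin 3))}
        rw [hT1]; rfl
      have f2 : myf n (Sum.inl (1:ZMod n)) = some (Sum.inr 2) := by
        show Sum.inl (1:ZMod n) ∈ {v | myf n v = some (Sum.inr (2:Fin 3))}
        rw [hT2]; rfl
      have hwrap : ((n - 2 : ℕ) : ZMod n) + 2 = 0 := by
        rw [← h2]
        have : ((n - 2 : ℕ) : ZMod n) + ((2:ℕ) : ZMod n) = ((n - 2 + 2 : ℕ) : ZMod n) := by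
          push_cast; ring
        rw [this, show n - 2 + 2 = n by omega, ZMod.natCast_self]
      intro a b
      fin_cases a <;> fin_cases b
      · exact ⟨_, _, e0, f0, adj_lr0 0⟩
      · exact ⟨_, _, e0, f1, by simpa using adj_lr2 0⟩
      · exact ⟨_, _, e0, f2, by simpa using adj_ll 0⟩
      · exact ⟨_, _, hmemN2, f0, by simpa [hwrap] using adj_lr2 ((n - 2 : ℕ) : ZMod n)⟩
      · exact ⟨_, _, hmem2, f1, adj_lr0 2⟩
      · exact ⟨_, _, hmem2, f2, by simpa [one_add_one_eq_two] using (adj_ll 1).symm⟩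
      · exact ⟨_, _, e2, f0, by simpa using (adj_rr 0).symm⟩
      · exact ⟨_, _, e2, f1, by simpa [one_add_one_eq_two] using adj_rr 1⟩
      · exact ⟨_, _, e2, f2, (adj_lr0 1).symm⟩
    rintro (a | a) (b | b) hadj <;> simp at hadj
    · obtain ⟨v₁, v₂, h₁, h₂, h₃⟩ := table a b
      exact ⟨v₁, v₂, h₁, h₂, h₃⟩
    · obtain ⟨v₁, v₂, h₁, h₂, h₃⟩ := table b a
      exact ⟨v₂, v₁, h₂, h₁, h₃.symm⟩
end

section
/- For all even n ≥ 4 the graph Γ_n({1,2}, {1}, {0}) is non-planar. -/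
abbrev G6 (n : ℕ) : SimpleGraph (ZMod n ⊕ ZMod n) := Gamma n {1, 2} {1} {0}

def fK5 (n : ℕ) : ZMod n ⊕ ZMod n → Option (Fin 5)
  | Sum.inl i => if i.val = 0 then some 0 else if i.val = 1 then some 1
      else if i.val = 2 then some 2 else some 3
  | Sum.inr j => if j.val ≤ 3 then some 4 else none

lemma cast_ne (n : ℕ) {a b : ℕ} (ha : a < n) (hb : b < n) (hab : a ≠ b) :
    ((a : ℕ) : ZMod n) ≠ ((b : ℕ) : ZMod n) := by
  intro h
  have := congrArg ZMod.val h
  rw [ZMod.val_cast_of_lt ha, ZMod.val_cast_of_lt hb] at this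
  exact hab this

lemma inl_val (n : ℕ) [NeZero n] (i : ZMod n) : ((i.val : ℕ) : ZMod n) = i :=
  ZMod.natCast_rightInverse i

lemma adjN1 (n : ℕ) (hn : 4 ≤ n) (k : ℕ) (hk : k < n) :
    (G6 n).Adj (Sum.inl ((k : ℕ) : ZMod n)) (Sum.inl (((k+1) % n : ℕ) : ZMod n)) := by
  rw [G6, Gamma, SimpleGraph.fromRel_adj]
  constructor
  · intro h
    have h2 := Sum.inl.inj h
    refine cast_ne n hk (Nat.mod_lt _ (by omega)) ?_ h2
    rcases Nat.lt_or_ge (k+1) n with h'|h'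
    · rw [Nat.mod_eq_of_lt h']; omega
    · have he : k+1 = n := by omega
      rw [he, Nat.mod_self]; omega
  · left
    refine ⟨1, by simp, ?_⟩
    push_cast [ZMod.natCast_mod]
    ring

lemma adjN1p (n : ℕ) (hn : 4 ≤ n) (k : ℕ) (hk : k + 1 < n) :
    (G6 n).Adj (Sum.inl ((k : ℕ) : ZMod n)) (Sum.inl (((k+1) : ℕ) : ZMod n)) := by
  have := adjN1 n hn k (by omega)
  rwa [Nat.mod_eq_of_lt hk] at this

lemma adjN2 (n : ℕ) (hn : 4 ≤ n) (k : ℕ) (hk : k + 2 < n) :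
    (G6 n).Adj (Sum.inl ((k : ℕ) : ZMod n)) (Sum.inl (((k+2) : ℕ) : ZMod n)) := by
  rw [G6, Gamma, SimpleGraph.fromRel_adj]
  refine ⟨fun h => cast_ne n (by omega) hk (by omega) (Sum.inl.inj h),
    Or.inl ⟨2, by simp, by push_cast; ring⟩⟩

lemma adjN1' (n : ℕ) (hn : 4 ≤ n) (k : ℕ) (hk : k + 1 < n) :
    (G6 n).Adj (Sum.inr ((k : ℕ) : ZMod n)) (Sum.inr (((k+1) : ℕ) : ZMod n)) := by
  rw [G6, Gamma, SimpleGraph.fromRel_adj]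
  refine ⟨fun h => cast_ne n (by omega) hk (by omega) (Sum.inr.inj h),
    Or.inl ⟨1, by simp, by push_cast; ring⟩⟩

lemma adjS (n : ℕ) (i : ZMod n) : (G6 n).Adj (Sum.inl i) (Sum.inr i) := by
  rw [G6, Gamma, SimpleGraph.fromRel_adj]
  exact ⟨by simp, Or.inl ⟨0, by simp, by simp⟩⟩

lemma fK5_inl (n : ℕ) {k : ℕ} (hk : k < n) :
    fK5 n (Sum.inl ((k : ℕ) : ZMod n)) =
      if k = 0 then some 0 else if k = 1 then some 1 else if k = 2 then some 2 else some 3 := by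
  simp only [fK5, ZMod.val_cast_of_lt hk]

lemma fK5_inr (n : ℕ) {k : ℕ} (hk : k < n) :
    fK5 n (Sum.inr ((k : ℕ) : ZMod n)) = if k ≤ 3 then some 4 else none := by
  simp only [fK5, ZMod.val_cast_of_lt hk]

lemma conn_sub {V : Type*} (G : SimpleGraph V) (s : Set V) (x : V) (hx : x ∈ s)
    (h : ∀ y ∈ s, y = x) : (G.induce s).Connected := by
  rw [SimpleGraph.connected_iff]
  refine ⟨fun a b => ?_, ⟨⟨x, hx⟩⟩⟩
  have : a = b := Subtype.ext ((h a a.2).trans (h b b.2).symm)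
  exact this ▸ SimpleGraph.Reachable.refl _

lemma memW3 (n : ℕ) {m : ℕ} (h3 : 3 ≤ m) (hm : m < n) :
    Sum.inl ((m : ℕ) : ZMod n) ∈ {v | fK5 n v = some 3} := by
  rw [Set.mem_setOf_eq, fK5_inl n hm, if_neg (by omega), if_neg (by omega), if_neg (by omega)]

lemma memW4 (n : ℕ) (hn : 4 ≤ n) {m : ℕ} (h3 : m ≤ 3) :
    Sum.inr ((m : ℕ) : ZMod n) ∈ {v | fK5 n v = some 4} := by
  rw [Set.mem_setOf_eq, fK5_inr n (by omega), if_pos h3]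

lemma reachW3 (n : ℕ) (hn : 4 ≤ n) :
    ∀ m, 3 ≤ m → m < n → ∀ (x y : {v // v ∈ {v | fK5 n v = some 3}}),
      x.1 = Sum.inl ((m : ℕ) : ZMod n) → y.1 = Sum.inl ((3 : ℕ) : ZMod n) →
      ((G6 n).induce {v | fK5 n v = some 3}).Reachable x y := by
  intro m h3
  induction m, h3 using Nat.le_induction with
  | base =>
    intro _ x y hx hy
    have : x = y := Subtype.ext (hx.trans hy.symm)
    exact this ▸ SimpleGraph.Reachable.refl _
  | succ m hm ih =>
    intro hmn x y hx hy
    have hmn' : m < n := by omega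
    set z : {v // v ∈ {v | fK5 n v = some 3}} :=
      ⟨Sum.inl ((m : ℕ) : ZMod n), memW3 n hm hmn'⟩ with hz
    have hadj : ((G6 n).induce {v | fK5 n v = some 3}).Adj x z := by
      show (G6 n).Adj x.1 z.1
      rw [hx, hz]
      have := adjN1p n hn m hmn
      exact this.symm
    exact (hadj.reachable).trans (ih hmn' z y rfl hy)

lemma reachW4 (n : ℕ) (hn : 4 ≤ n) :
    ∀ m, m ≤ 3 → ∀ (x y : {v // v ∈ {v | fK5 n v = some 4}}),
      x.1 = Sum.inr ((m : ℕ) : ZMod n) → y.1 = Sum.inr ((0 : ℕ) : ZMod n) →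
      ((G6 n).induce {v | fK5 n v = some 4}).Reachable x y := by
  intro m
  induction m with
  | zero =>
    intro _ x y hx hy
    have : x = y := Subtype.ext (hx.trans hy.symm)
    exact this ▸ SimpleGraph.Reachable.refl _
  | succ m ih =>
    intro hm x y hx hy
    set z : {v // v ∈ {v | fK5 n v = some 4}} :=
      ⟨Sum.inr ((m : ℕ) : ZMod n), memW4 n hn (by omega)⟩ with hz
    have hadj : ((G6 n).induce {v | fK5 n v = some 4}).Adj x z := by
      show (G6 n).Adj x.1 z.1
      rw [hx, hz]
      exact (adjN1' n hn m (by omega)).symm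
    exact (hadj.reachable).trans (ih (by omega) z y rfl hy)

lemma conn0 (n : ℕ) [NeZero n] (hn : 4 ≤ n) :
    ((G6 n).induce {v | fK5 n v = some (0 : Fin 5)}).Connected := by
  apply conn_sub _ _ (Sum.inl ((0:ℕ) : ZMod n))
  · rw [Set.mem_setOf_eq, fK5_inl n (by omega)]; rfl
  · rintro (i|j) h
    · simp only [Set.mem_setOf_eq, fK5] at h
      split_ifs at h with h0 h1 h2
      · rw [← inl_val n i, h0]
      · exact absurd h (by decide)
      · exact absurd h (by decide)
      · exact absurd h (by decide)
    · simp only [Set.mem_setOf_eq, fK5] at h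
      split_ifs at h <;> exact absurd h (by decide)

lemma conn1 (n : ℕ) [NeZero n] (hn : 4 ≤ n) :
    ((G6 n).induce {v | fK5 n v = some (1 : Fin 5)}).Connected := by
  apply conn_sub _ _ (Sum.inl ((1:ℕ) : ZMod n))
  · rw [Set.mem_setOf_eq, fK5_inl n (by omega)]; rfl
  · rintro (i|j) h
    · simp only [Set.mem_setOf_eq, fK5] at h
      split_ifs at h with h0 h1 h2
      · exact absurd h (by decide)
      · rw [← inl_val n i, h1]
      · exact absurd h (by decide)
      · exact absurd h (by decide)
    · simp only [Set.mem_setOf_eq, fK5] at h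
      split_ifs at h <;> exact absurd h (by decide)

lemma conn2 (n : ℕ) [NeZero n] (hn : 4 ≤ n) :
    ((G6 n).induce {v | fK5 n v = some (2 : Fin 5)}).Connected := by
  apply conn_sub _ _ (Sum.inl ((2:ℕ) : ZMod n))
  · rw [Set.mem_setOf_eq, fK5_inl n (by omega)]; rfl
  · rintro (i|j) h
    · simp only [Set.mem_setOf_eq, fK5] at h
      split_ifs at h with h0 h1 h2
      · exact absurd h (by decide)
      · exact absurd h (by decide)
      · rw [← inl_val n i, h2]
      · exact absurd h (by decide)
    · simp only [Set.mem_setOf_eq, fK5] at h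
      split_ifs at h <;> exact absurd h (by decide)

lemma conn3 (n : ℕ) [NeZero n] (hn : 4 ≤ n) :
    ((G6 n).induce {v | fK5 n v = some (3 : Fin 5)}).Connected := by
  rw [SimpleGraph.connected_iff]
  have hb : Sum.inl ((3:ℕ) : ZMod n) ∈ {v | fK5 n v = some (3 : Fin 5)} :=
    memW3 n le_rfl (by omega)
  have reach : ∀ u : {v // v ∈ {v | fK5 n v = some (3 : Fin 5)}},
      ((G6 n).induce {v | fK5 n v = some (3 : Fin 5)}).Reachable u ⟨_, hb⟩ := by
    rintro ⟨(i|j), hu⟩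
    · have h3 : 3 ≤ i.val := by
        simp only [Set.mem_setOf_eq, fK5] at hu
        split_ifs at hu with h0 h1 h2
        · exact absurd hu (by decide)
        · exact absurd hu (by decide)
        · exact absurd hu (by decide)
        · omega
      exact reachW3 n hn i.val h3 (ZMod.val_lt i) _ _ (by rw [inl_val]) rfl
    · exfalso
      simp only [Set.mem_setOf_eq, fK5] at hu
      split_ifs at hu <;> exact absurd hu (by decide)
  exact ⟨fun a b => (reach a).trans (reach b).symm, ⟨⟨_, hb⟩⟩⟩

lemma conn4 (n : ℕ) [NeZero n] (hn : 4 ≤ n) :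
    ((G6 n).induce {v | fK5 n v = some (4 : Fin 5)}).Connected := by
  rw [SimpleGraph.connected_iff]
  have hb : Sum.inr ((0:ℕ) : ZMod n) ∈ {v | fK5 n v = some (4 : Fin 5)} :=
    memW4 n hn (by omega)
  have reach : ∀ u : {v // v ∈ {v | fK5 n v = some (4 : Fin 5)}},
      ((G6 n).induce {v | fK5 n v = some (4 : Fin 5)}).Reachable u ⟨_, hb⟩ := by
    rintro ⟨(i|j), hu⟩
    · exfalso
      simp only [Set.mem_setOf_eq, fK5] at hu
      split_ifs at hu <;> exact absurd hu (by decide)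
    · have h3 : j.val ≤ 3 := by
        simp only [Set.mem_setOf_eq, fK5] at hu
        split_ifs at hu with h0
        exact h0
      exact reachW4 n hn j.val h3 _ _ (by rw [inl_val]) rfl
  exact ⟨fun a b => (reach a).trans (reach b).symm, ⟨⟨_, hb⟩⟩⟩

theorem stmt6 (n : ℕ) (hn : 4 ≤ n) (he : Even n) :
    ¬ (Gamma n {1, 2} {1} {0}).Planar := by
  haveI : NeZero n := ⟨by omega⟩
  rintro ⟨h5, -⟩
  apply h5
  refine ⟨fK5 n, ?_, ?_⟩
  · intro w
    fin_cases w
    · exact conn0 n hn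
    · exact conn1 n hn
    · exact conn2 n hn
    · exact conn3 n hn
    · exact conn4 n hn
  · have F0 : fK5 n (Sum.inl ((0:ℕ):ZMod n)) = some 0 := by rw [fK5_inl n (by omega)]; rfl
    have F1 : fK5 n (Sum.inl ((1:ℕ):ZMod n)) = some 1 := by rw [fK5_inl n (by omega)]; rfl
    have F2 : fK5 n (Sum.inl ((2:ℕ):ZMod n)) = some 2 := by rw [fK5_inl n (by omega)]; rfl
    have F3 : fK5 n (Sum.inl ((3:ℕ):ZMod n)) = some 3 := memW3 n le_rfl (by omega)
    have F3' : fK5 n (Sum.inl (((n-1):ℕ):ZMod n)) = some 3 := memW3 n (by omega) (by omega)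
    have F40 : fK5 n (Sum.inr ((0:ℕ):ZMod n)) = some 4 := memW4 n hn (by omega)
    have F41 : fK5 n (Sum.inr ((1:ℕ):ZMod n)) = some 4 := memW4 n hn (by omega)
    have F42 : fK5 n (Sum.inr ((2:ℕ):ZMod n)) = some 4 := memW4 n hn (by omega)
    have F43 : fK5 n (Sum.inr ((3:ℕ):ZMod n)) = some 4 := memW4 n hn (by omega)
    have E03 : (G6 n).Adj (Sum.inl (((n-1):ℕ):ZMod n)) (Sum.inl ((0:ℕ):ZMod n)) := by
      have h := adjN1 n hn (n-1) (by omega)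
      rwa [show (n-1+1) % n = 0 by rw [Nat.sub_add_cancel (by omega), Nat.mod_self]] at h
    have key : ∀ w₁ w₂ : Fin 5, w₁ < w₂ →
        ∃ v₁ v₂, fK5 n v₁ = some w₁ ∧ fK5 n v₂ = some w₂ ∧ (G6 n).Adj v₁ v₂ := by
      intro w₁ w₂ hlt
      fin_cases w₁ <;> fin_cases w₂ <;>
        first
        | exact absurd hlt (by decide)
        | exact ⟨_, _, F0, F1, adjN1p n hn 0 (by omega)⟩
        | exact ⟨_, _, F0, F2, adjN2 n hn 0 (by omega)⟩
        | exact ⟨_, _, F0, F3', E03.symm⟩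
        | exact ⟨_, _, F0, F40, adjS n _⟩
        | exact ⟨_, _, F1, F2, adjN1p n hn 1 (by omega)⟩
        | exact ⟨_, _, F1, F3, adjN2 n hn 1 (by omega)⟩
        | exact ⟨_, _, F1, F41, adjS n _⟩
        | exact ⟨_, _, F2, F3, adjN1p n hn 2 (by omega)⟩
        | exact ⟨_, _, F2, F42, adjS n _⟩
        | exact ⟨_, _, F3, F43, adjS n _⟩
    intro w₁ w₂ hadj
    rcases lt_or_gt_of_ne hadj.ne with h | h
    · exact key w₁ w₂ h
    · obtain ⟨v₁, v₂, h1, h2, ha⟩ := key w₂ w₁ h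
      exact ⟨v₂, v₁, h2, h1, ha.symm⟩
end

section
/- For all n ≥ 4 with n ≡ 2 (mod 4), the graph Γ_n({2}, {2}, {0, n/2}) is non-planar. -/
namespace Stmt7Aux

lemma cast_eq_cast_iff {n : ℕ} (hn : 0 < n) {a b : ℕ} (ha : a < n) (hb : b < n) :
    ((a : ZMod n) = (b : ZMod n)) ↔ a = b := by
  haveI : NeZero n := ⟨hn.ne'⟩
  rw [ZMod.natCast_eq_natCast_iff, Nat.ModEq, Nat.mod_eq_of_lt ha, Nat.mod_eq_of_lt hb]

lemma cast_add_n {n : ℕ} (a : ℕ) : ((a + n : ℕ) : ZMod n) = (a : ZMod n) := by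
  push_cast [ZMod.natCast_self]
  ring

lemma gamma_adj_ll {n : ℕ} {x y : ZMod n} (hne : x ≠ y)
    (hr : y = x + ((2:ℕ) : ZMod n) ∨ x = y + ((2:ℕ) : ZMod n)) :
    (Gamma n {2} {2} {0, n / 2}).Adj (Sum.inl x) (Sum.inl y) := by
  rw [Gamma, SimpleGraph.fromRel_adj]
  refine ⟨by simpa using hne, ?_⟩
  rcases hr with hr | hr
  · exact Or.inl ⟨2, by simp, hr⟩
  · exact Or.inr ⟨2, by simp, hr⟩

lemma gamma_adj_rr {n : ℕ} {x y : ZMod n} (hne : x ≠ y)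
    (hr : y = x + ((2:ℕ) : ZMod n) ∨ x = y + ((2:ℕ) : ZMod n)) :
    (Gamma n {2} {2} {0, n / 2}).Adj (Sum.inr x) (Sum.inr y) := by
  rw [Gamma, SimpleGraph.fromRel_adj]
  refine ⟨by simpa using hne, ?_⟩
  rcases hr with hr | hr
  · exact Or.inl ⟨2, by simp, hr⟩
  · exact Or.inr ⟨2, by simp, hr⟩

lemma gamma_adj_lr {n : ℕ} {x y : ZMod n}
    (hr : y = x ∨ y = x + ((n / 2 : ℕ) : ZMod n)) :
    (Gamma n {2} {2} {0, n / 2}).Adj (Sum.inl x) (Sum.inr y) := by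
  rw [Gamma, SimpleGraph.fromRel_adj]
  refine ⟨by simp, ?_⟩
  rcases hr with hr | hr
  · exact Or.inl ⟨0, by simp, by simpa using hr⟩
  · exact Or.inl ⟨n / 2, by simp, hr⟩

lemma induce_connected_of_chain {V : Type*} {G : SimpleGraph V} {S : Set V}
    (g : ℕ → V) (b : ℕ)
    (hmem : ∀ k, k ≤ b → g k ∈ S)
    (hadj : ∀ k, k < b → G.Adj (g k) (g (k+1)))
    (hcov : ∀ v ∈ S, ∃ k, k ≤ b ∧ g k = v) :
    (G.induce S).Connected := by
  have hre : ∀ k, ∀ hk : k ≤ b,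
      (G.induce S).Reachable ⟨g 0, hmem 0 (Nat.zero_le _)⟩ ⟨g k, hmem k hk⟩ := by
    intro k
    induction k with
    | zero => intro hk; exact SimpleGraph.Reachable.refl _
    | succ k ih =>
      intro hk
      refine (ih (by omega)).trans (SimpleGraph.Adj.reachable ?_)
      exact hadj k (by omega)
  haveI : Nonempty S := ⟨⟨g 0, hmem 0 (Nat.zero_le _)⟩⟩
  refine ⟨?_⟩
  intro u v
  obtain ⟨k, hk, hgk⟩ := hcov u.1 u.2
  obtain ⟨l, hl, hgl⟩ := hcov v.1 v.2
  have hu : u = ⟨g k, hmem k hk⟩ := Subtype.ext hgk.symm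
  have hv : v = ⟨g l, hmem l hl⟩ := Subtype.ext hgl.symm
  rw [hu, hv]
  exact (hre k hk).symm.trans (hre l hl)

/-- The branch-set assignment realizing a `K_{3,3}` minor in `Γ_n({2},{2},{0,n/2})`. -/
def phi (n : ℕ) : ZMod n ⊕ ZMod n → Option (Fin 3 ⊕ Fin 3)
  | Sum.inl x =>
      if x = 0 then some (Sum.inr 2)
      else if x = 2 then some (Sum.inl 2)
      else if x.val % 2 = 0 then some (Sum.inl 0) else some (Sum.inl 1)
  | Sum.inr x =>
      if x = 0 ∨ x = ((n / 2 : ℕ) : ZMod n) then some (Sum.inr 2)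
      else if x = 2 then some (Sum.inl 2)
      else if x.val % 2 = 0 then some (Sum.inr 0) else some (Sum.inr 1)

lemma k33 (n : ℕ) (hn : 4 ≤ n) (h : n % 4 = 2) :
    (completeBipartiteGraph (Fin 3) (Fin 3)).IsMinorOf (Gamma n {2} {2} {0, n / 2}) := by
  haveI : NeZero n := ⟨by omega⟩
  have hn0 : 0 < n := by omega
  have hdvd : 2 ∣ n := ⟨n / 2, by omega⟩
  have hval : ∀ a : ℕ, ((a : ZMod n)).val % 2 = a % 2 := fun a => by
    rw [ZMod.val_natCast]; exact Nat.mod_mod_of_dvd a hdvd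
  have two_eq : (2 : ZMod n) = ((2:ℕ) : ZMod n) := by norm_cast
  have hne : ∀ a b : ℕ, a < n → b < n → a ≠ b → ((a : ZMod n) ≠ (b : ZMod n)) :=
    fun a b ha hb hab hc => hab ((cast_eq_cast_iff hn0 ha hb).1 hc)
  have hXval : ∀ x : ZMod n, ((x.val : ℕ) : ZMod n) = x := fun x => ZMod.natCast_rightInverse x
  have hnz : ∀ a : ℕ, 0 < a → a < n → ((a : ZMod n) ≠ 0) := by
    intro a h1 h2 hc
    exact hne a 0 h2 hn0 (by omega) (by exact_mod_cast hc)
  have hne2 : ∀ a b : ℕ, b = a + 2 → ((a : ZMod n) ≠ (b : ZMod n)) := by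
    intro a b hb hc
    have hb' : (b : ZMod n) = (a : ZMod n) + ((2:ℕ) : ZMod n) := by
      rw [hb]; push_cast; ring
    rw [hb'] at hc
    have h2z : ((2:ℕ) : ZMod n) = 0 := (left_eq_add.1 hc)
    exact hnz 2 (by omega) (by omega) h2z
  -- evaluation lemmas for phi
  have phiX0 : ∀ a : ℕ, a < n → a ≠ 0 → a ≠ 2 → a % 2 = 0 →
      phi n (Sum.inl (a : ZMod n)) = some (Sum.inl 0) := by
    intro a h1 h2 h3 h4
    have h0' : (a : ZMod n) ≠ 0 := hnz a (by omega) h1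
    have h2' : (a : ZMod n) ≠ 2 := by rw [two_eq]; exact hne a 2 h1 (by omega) h3
    have hp' : ((a : ZMod n)).val % 2 = 0 := by rw [hval]; exact h4
    simp only [phi]
    rw [if_neg h0', if_neg h2', if_pos hp']
  have phiX1 : ∀ a : ℕ, a < n → a ≠ 0 → a ≠ 2 → a % 2 = 1 →
      phi n (Sum.inl (a : ZMod n)) = some (Sum.inl 1) := by
    intro a h1 h2 h3 h4
    have h0' : (a : ZMod n) ≠ 0 := hnz a (by omega) h1
    have h2' : (a : ZMod n) ≠ 2 := by rw [two_eq]; exact hne a 2 h1 (by omega) h3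
    have hp' : ¬ (((a : ZMod n)).val % 2 = 0) := by rw [hval]; omega
    simp only [phi]
    rw [if_neg h0', if_neg h2', if_neg hp']
  have phiWl : phi n (Sum.inl ((2:ℕ) : ZMod n)) = some (Sum.inl 2) := by
    have h0' : ((2:ℕ) : ZMod n) ≠ 0 := hnz 2 (by omega) (by omega)
    simp only [phi]
    rw [if_neg h0', if_pos two_eq.symm]
  have phiZl : phi n (Sum.inl (0 : ZMod n)) = some (Sum.inr 2) := by
    simp only [phi]
    rw [if_pos trivial]
  have phiY0 : ∀ a : ℕ, a < n → a ≠ 0 → a ≠ n / 2 → a ≠ 2 → a % 2 = 0 →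
      phi n (Sum.inr (a : ZMod n)) = some (Sum.inr 0) := by
    intro a h1 h2 hm h3 h4
    have h0' : ¬ ((a : ZMod n) = 0 ∨ (a : ZMod n) = ((n / 2 : ℕ) : ZMod n)) := by
      push_neg
      exact ⟨hnz a (by omega) h1, hne a (n / 2) h1 (by omega) hm⟩
    have h2' : (a : ZMod n) ≠ 2 := by rw [two_eq]; exact hne a 2 h1 (by omega) h3
    have hp' : ((a : ZMod n)).val % 2 = 0 := by rw [hval]; exact h4
    simp only [phi]
    rw [if_neg h0', if_neg h2', if_pos hp']
  have phiY1 : ∀ a : ℕ, a < n → a ≠ 0 → a ≠ n / 2 → a ≠ 2 → a % 2 = 1 →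
      phi n (Sum.inr (a : ZMod n)) = some (Sum.inr 1) := by
    intro a h1 h2 hm h3 h4
    have h0' : ¬ ((a : ZMod n) = 0 ∨ (a : ZMod n) = ((n / 2 : ℕ) : ZMod n)) := by
      push_neg
      exact ⟨hnz a (by omega) h1, hne a (n / 2) h1 (by omega) hm⟩
    have h2' : (a : ZMod n) ≠ 2 := by rw [two_eq]; exact hne a 2 h1 (by omega) h3
    have hp' : ¬ (((a : ZMod n)).val % 2 = 0) := by rw [hval]; omega
    simp only [phi]
    rw [if_neg h0', if_neg h2', if_neg hp']
  have phiWr : phi n (Sum.inr ((2:ℕ) : ZMod n)) = some (Sum.inl 2) := by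
    have h0' : ¬ (((2:ℕ) : ZMod n) = 0 ∨ ((2:ℕ) : ZMod n) = ((n / 2 : ℕ) : ZMod n)) := by
      push_neg
      refine ⟨hnz 2 (by omega) (by omega), hne 2 (n / 2) (by omega) (by omega) (by omega)⟩
    simp only [phi]
    rw [if_neg h0', if_pos two_eq.symm]
  have phiZr0 : phi n (Sum.inr (0 : ZMod n)) = some (Sum.inr 2) := by
    simp only [phi]
    rw [if_pos (Or.inl trivial)]
  have phiZrm : phi n (Sum.inr ((n / 2 : ℕ) : ZMod n)) = some (Sum.inr 2) := by
    simp only [phi]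
    rw [if_pos (Or.inr trivial)]
  have hstep : ∀ a b : ℕ, b = a + 2 → ((b : ℕ) : ZMod n) = ((a : ℕ) : ZMod n) + ((2:ℕ) : ZMod n) := by
    intro a b hb
    rw [← Nat.cast_add]
    exact congrArg _ hb
  refine ⟨phi n, ?_, ?_⟩
  · intro w
    rcases w with i | i <;> fin_cases i
    · -- X0 : even v's except 0, 2
      refine induce_connected_of_chain (fun k => Sum.inl ((2 * (k + 2) : ℕ) : ZMod n))
        (n / 2 - 3) ?_ ?_ ?_
      · intro k hk
        exact phiX0 (2 * (k + 2)) (by omega) (by omega) (by omega) (by omega)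
      · intro k hk
        exact gamma_adj_ll (hne2 _ _ (by omega)) (Or.inl (hstep _ _ (by omega)))
      · intro v hv
        rcases v with x | x
        · simp only [Set.mem_setOf_eq, phi] at hv
          split_ifs at hv with h0 h2 hp
          · simp at hv
          · simp at hv
          · have hxlt := ZMod.val_lt x
            have hx0 : x.val ≠ 0 := fun hc => h0 (by rw [← hXval x, hc]; norm_cast)
            have hx2 : x.val ≠ 2 := fun hc => h2 (by rw [← hXval x, hc]; norm_cast)
            refine ⟨x.val / 2 - 2, by omega, ?_⟩
            show Sum.inl ((2 * (x.val / 2 - 2 + 2) : ℕ) : ZMod n) = Sum.inl x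
            rw [show 2 * (x.val / 2 - 2 + 2) = x.val by omega, hXval]
          · simp at hv
        · simp only [Set.mem_setOf_eq, phi] at hv
          split_ifs at hv <;> simp at hv
    · -- X1 : odd v's
      refine induce_connected_of_chain (fun k => Sum.inl ((2 * k + 1 : ℕ) : ZMod n))
        (n / 2 - 1) ?_ ?_ ?_
      · intro k hk
        exact phiX1 (2 * k + 1) (by omega) (by omega) (by omega) (by omega)
      · intro k hk
        exact gamma_adj_ll (hne2 _ _ (by omega)) (Or.inl (hstep _ _ (by omega)))
      · intro v hv
        rcases v with x | x
        · simp only [Set.mem_setOf_eq, phi] at hv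
          split_ifs at hv with h0 h2 hp
          · simp at hv
          · simp at hv
          · simp at hv
          · have hxlt := ZMod.val_lt x
            refine ⟨x.val / 2, by omega, ?_⟩
            show Sum.inl ((2 * (x.val / 2) + 1 : ℕ) : ZMod n) = Sum.inl x
            rw [show 2 * (x.val / 2) + 1 = x.val by omega, hXval]
        · simp only [Set.mem_setOf_eq, phi] at hv
          split_ifs at hv <;> simp at hv
    · -- W : {v_2, v'_2}
      refine induce_connected_of_chain
        (fun k => match k with
          | 0 => Sum.inl ((2:ℕ) : ZMod n)
          | _ => Sum.inr ((2:ℕ) : ZMod n)) 1 ?_ ?_ ?_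
      · intro k hk
        interval_cases k
        · exact phiWl
        · exact phiWr
      · intro k hk
        interval_cases k
        exact gamma_adj_lr (Or.inl rfl)
      · intro v hv
        rcases v with x | x
        · simp only [Set.mem_setOf_eq, phi] at hv
          split_ifs at hv with h0 h2 hp
          · simp at hv
          · refine ⟨0, by omega, ?_⟩
            show Sum.inl ((2:ℕ) : ZMod n) = Sum.inl x
            rw [h2, two_eq]
          · simp at hv
          · simp at hv
        · simp only [Set.mem_setOf_eq, phi] at hv
          split_ifs at hv with h0 h2 hp
          · simp at hv
          · refine ⟨1, by omega, ?_⟩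
            show Sum.inr ((2:ℕ) : ZMod n) = Sum.inr x
            rw [h2, two_eq]
          · simp at hv
          · simp at hv
    · -- Y0 : even v''s except 0, 2
      refine induce_connected_of_chain (fun k => Sum.inr ((2 * (k + 2) : ℕ) : ZMod n))
        (n / 2 - 3) ?_ ?_ ?_
      · intro k hk
        exact phiY0 (2 * (k + 2)) (by omega) (by omega) (by omega) (by omega) (by omega)
      · intro k hk
        exact gamma_adj_rr (hne2 _ _ (by omega)) (Or.inl (hstep _ _ (by omega)))
      · intro v hv
        rcases v with x | x
        · simp only [Set.mem_setOf_eq, phi] at hv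
          split_ifs at hv <;> simp at hv
        · simp only [Set.mem_setOf_eq, phi] at hv
          split_ifs at hv with h0 h2 hp
          · simp at hv
          · simp at hv
          · have hxlt := ZMod.val_lt x
            push_neg at h0
            have hx0 : x.val ≠ 0 := fun hc => h0.1 (by rw [← hXval x, hc]; norm_cast)
            have hxm : x.val ≠ n / 2 := fun hc => h0.2 (by rw [← hXval x, hc])
            have hx2 : x.val ≠ 2 := fun hc => h2 (by rw [← hXval x, hc]; norm_cast)
            refine ⟨x.val / 2 - 2, by omega, ?_⟩
            show Sum.inr ((2 * (x.val / 2 - 2 + 2) : ℕ) : ZMod n) = Sum.inr x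
            rw [show 2 * (x.val / 2 - 2 + 2) = x.val by omega, hXval]
          · simp at hv
    · -- Y1 : odd v''s except n/2
      refine induce_connected_of_chain (fun k => Sum.inr ((n / 2 + 2 + 2 * k : ℕ) : ZMod n))
        (n / 2 - 2) ?_ ?_ ?_
      · intro k hk
        show phi n (Sum.inr ((n / 2 + 2 + 2 * k : ℕ) : ZMod n)) = some (Sum.inr 1)
        rcases Nat.lt_or_ge (n / 2 + 2 + 2 * k) n with hlt | hge
        · exact phiY1 _ hlt (by omega) (by omega) (by omega) (by omega)
        · rw [show n / 2 + 2 + 2 * k = (n / 2 + 2 + 2 * k - n) + n by omega, cast_add_n]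
          exact phiY1 _ (by omega) (by omega) (by omega) (by omega) (by omega)
      · intro k hk
        refine gamma_adj_rr ?_ (Or.inl (hstep _ _ (by omega)))
        exact hne2 _ _ (by omega)
      · intro v hv
        rcases v with x | x
        · simp only [Set.mem_setOf_eq, phi] at hv
          split_ifs at hv <;> simp at hv
        · simp only [Set.mem_setOf_eq, phi] at hv
          split_ifs at hv with h0 h2 hp
          · simp at hv
          · simp at hv
          · simp at hv
          · have hxlt := ZMod.val_lt x
            push_neg at h0
            have hx0 : x.val ≠ 0 := fun hc => h0.1 (by rw [← hXval x, hc]; norm_cast)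
            have hxm : x.val ≠ n / 2 := fun hc => h0.2 (by rw [← hXval x, hc])
            have hxp : x.val % 2 = 1 := by omega
            rcases Nat.lt_or_ge x.val (n / 2) with hlt | hge
            · refine ⟨(x.val + n / 2 - 2) / 2, by omega, ?_⟩
              show Sum.inr ((n / 2 + 2 + 2 * ((x.val + n / 2 - 2) / 2) : ℕ) : ZMod n) = Sum.inr x
              rw [show n / 2 + 2 + 2 * ((x.val + n / 2 - 2) / 2) = x.val + n by omega,
                cast_add_n, hXval]
            · refine ⟨(x.val - n / 2 - 2) / 2, by omega, ?_⟩
              show Sum.inr ((n / 2 + 2 + 2 * ((x.val - n / 2 - 2) / 2) : ℕ) : ZMod n) = Sum.inr x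
              rw [show n / 2 + 2 + 2 * ((x.val - n / 2 - 2) / 2) = x.val by omega, hXval]
    · -- Z : {v'_0, v_0, v'_{n/2}}
      refine induce_connected_of_chain
        (fun k => match k with
          | 0 => Sum.inr (0 : ZMod n)
          | 1 => Sum.inl (0 : ZMod n)
          | _ => Sum.inr ((n / 2 : ℕ) : ZMod n)) 2 ?_ ?_ ?_
      · intro k hk
        interval_cases k
        · exact phiZr0
        · exact phiZl
        · exact phiZrm
      · intro k hk
        interval_cases k
        · exact (gamma_adj_lr (Or.inl rfl)).symm
        · exact gamma_adj_lr (Or.inr (zero_add _).symm)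
      · intro v hv
        rcases v with x | x
        · simp only [Set.mem_setOf_eq, phi] at hv
          split_ifs at hv with h0 h2 hp
          · exact ⟨1, by omega, by simp [h0]⟩
          · simp at hv
          · simp at hv
          · simp at hv
        · simp only [Set.mem_setOf_eq, phi] at hv
          split_ifs at hv with h0 h2 hp
          · rcases h0 with h0 | h0
            · exact ⟨0, by omega, by simp [h0]⟩
            · exact ⟨2, by omega, by simp [h0]⟩
          · simp at hv
          · simp at hv
          · simp at hv
  · have key : ∀ i j : Fin 3, ∃ v₁ v₂, phi n v₁ = some (Sum.inl i) ∧
        phi n v₂ = some (Sum.inr j) ∧ (Gamma n {2} {2} {0, n / 2}).Adj v₁ v₂ := by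
      intro i j
      fin_cases i <;> fin_cases j
      · -- X0 - Y0 : v_4, v'_4
        exact ⟨Sum.inl ((4:ℕ) : ZMod n), Sum.inr ((4:ℕ) : ZMod n),
          phiX0 4 (by omega) (by omega) (by omega) (by omega),
          phiY0 4 (by omega) (by omega) (by omega) (by omega) (by omega),
          gamma_adj_lr (Or.inl rfl)⟩
      · -- X0 - Y1 : v_{n-2}, v'_{n/2-2}
        refine ⟨Sum.inl ((n - 2 : ℕ) : ZMod n), Sum.inr ((n / 2 - 2 : ℕ) : ZMod n),
          phiX0 (n - 2) (by omega) (by omega) (by omega) (by omega),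
          phiY1 (n / 2 - 2) (by omega) (by omega) (by omega) (by omega) (by omega),
          gamma_adj_lr (Or.inr ?_)⟩
        rw [← Nat.cast_add, show n - 2 + n / 2 = (n / 2 - 2) + n by omega, cast_add_n]
      · -- X0 - Z : v_{n-2}, v_0
        refine ⟨Sum.inl ((n - 2 : ℕ) : ZMod n), Sum.inl (0 : ZMod n),
          phiX0 (n - 2) (by omega) (by omega) (by omega) (by omega),
          phiZl, gamma_adj_ll (hnz (n - 2) (by omega) (by omega)) (Or.inl ?_)⟩
        rw [← Nat.cast_add, show n - 2 + 2 = 0 + n by omega, cast_add_n, Nat.cast_zero]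
      · -- X1 - Y0 : v_1, v'_{n/2+1}
        refine ⟨Sum.inl ((1:ℕ) : ZMod n), Sum.inr ((n / 2 + 1 : ℕ) : ZMod n),
          phiX1 1 (by omega) (by omega) (by omega) (by omega),
          phiY0 (n / 2 + 1) (by omega) (by omega) (by omega) (by omega) (by omega),
          gamma_adj_lr (Or.inr ?_)⟩
        rw [← Nat.cast_add]
        exact congrArg _ (by omega)
      · -- X1 - Y1 : v_1, v'_1
        exact ⟨Sum.inl ((1:ℕ) : ZMod n), Sum.inr ((1:ℕ) : ZMod n),
          phiX1 1 (by omega) (by omega) (by omega) (by omega),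
          phiY1 1 (by omega) (by omega) (by omega) (by omega) (by omega),
          gamma_adj_lr (Or.inl rfl)⟩
      · -- X1 - Z : v_{n/2}, v'_{n/2}
        exact ⟨Sum.inl ((n / 2 : ℕ) : ZMod n), Sum.inr ((n / 2 : ℕ) : ZMod n),
          phiX1 (n / 2) (by omega) (by omega) (by omega) (by omega),
          phiZrm, gamma_adj_lr (Or.inl rfl)⟩
      · -- W - Y0 : v'_2, v'_4
        exact ⟨Sum.inr ((2:ℕ) : ZMod n), Sum.inr ((4:ℕ) : ZMod n),
          phiWr, phiY0 4 (by omega) (by omega) (by omega) (by omega) (by omega),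
          gamma_adj_rr (hne2 2 4 (by omega)) (Or.inl (hstep 2 4 (by omega)))⟩
      · -- W - Y1 : v_2, v'_{n/2+2}
        refine ⟨Sum.inl ((2:ℕ) : ZMod n), Sum.inr ((n / 2 + 2 : ℕ) : ZMod n),
          phiWl, phiY1 (n / 2 + 2) (by omega) (by omega) (by omega) (by omega) (by omega),
          gamma_adj_lr (Or.inr ?_)⟩
        rw [← Nat.cast_add]
        exact congrArg _ (by omega)
      · -- W - Z : v_2, v_0
        exact ⟨Sum.inl ((2:ℕ) : ZMod n), Sum.inl (0 : ZMod n),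
          phiWl, phiZl,
          gamma_adj_ll (hnz 2 (by omega) (by omega)) (Or.inr (zero_add _).symm)⟩
    intro w₁ w₂ hw
    rcases w₁ with i | i <;> rcases w₂ with j | j
    · simp [completeBipartiteGraph] at hw
    · obtain ⟨v₁, v₂, h1, h2, h3⟩ := key i j
      exact ⟨v₁, v₂, h1, h2, h3⟩
    · obtain ⟨v₁, v₂, h1, h2, h3⟩ := key j i
      exact ⟨v₂, v₁, h2, h1, h3.symm⟩
    · simp [completeBipartiteGraph] at hw

end Stmt7Aux

theorem stmt7 (n : ℕ) (hn : 4 ≤ n) (h : n % 4 = 2) :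
    ¬ (Gamma n {2} {2} {0, n / 2}).Planar := by
  intro hP
  exact hP.2 (Stmt7Aux.k33 n hn h)
end

section
/- For all n ≥ 4 with n ≡ 2 (mod 4), the graph Γ_n({2, n/2}, {2, n/2}, {0}) is non-planar. -/
/-- branch map -/
def brMap (n : ℕ) : ZMod n ⊕ ZMod n → Option (Fin 3 ⊕ Fin 3)
  | Sum.inl j =>
      if j = ((0:ℕ) : ZMod n) then some (Sum.inl 2)
      else if j = ((n/2 : ℕ) : ZMod n) ∨ j = ((n/2+2 : ℕ) : ZMod n) then some (Sum.inr 2)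
      else if j.val % 2 = 0 then some (Sum.inl 0) else none
  | Sum.inr j =>
      if j = ((0:ℕ) : ZMod n) then some (Sum.inl 2)
      else if j = ((2:ℕ) : ZMod n) then some (Sum.inr 0)
      else if j = ((n-2:ℕ) : ZMod n) then some (Sum.inr 1)
      else if j.val % 2 = 1 then some (Sum.inl 1) else none

theorem key (n : ℕ) (hn : 4 ≤ n) (h : n % 4 = 2) :
    (completeBipartiteGraph (Fin 3) (Fin 3)).IsMinorOf (Gamma n {2, n / 2} {2, n / 2} {0}) := by
  have hn6 : 6 ≤ n := by omega
  haveI : NeZero n := ⟨by omega⟩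
  have hm2 : (n/2) % 2 = 1 := by omega
  have hnm : n = 2 * (n/2) := by omega
  -- val computations
  have vv : ∀ a : ℕ, a < n → ((a : ZMod n)).val = a := fun a ha => ZMod.val_cast_of_lt ha
  have vinj : ∀ a b : ℕ, a < n → b < n → ((a : ZMod n)) = ((b : ZMod n)) → a = b := by
    intro a b ha hb hab
    have := congrArg ZMod.val hab
    rwa [vv a ha, vv b hb] at this
  have vne : ∀ a b : ℕ, a < n → b < n → a ≠ b → ((a : ZMod n)) ≠ ((b : ZMod n)) :=
    fun a b ha hb hab hc => hab (vinj a b ha hb hc)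
  -- the graph adjacency helpers
  have adjl : ∀ (i : ZMod n) (a : ℕ), a ∈ ({2, n/2} : Finset ℕ) → (a : ZMod n) ≠ 0 →
      (Gamma n {2, n / 2} {2, n / 2} {0}).Adj (Sum.inl i) (Sum.inl (i + (a : ZMod n))) := by
    intro i a ha h0
    rw [Gamma, SimpleGraph.fromRel_adj]
    refine ⟨?_, Or.inl ⟨a, ha, rfl⟩⟩
    intro hc
    exact h0 (left_eq_add.mp (Sum.inl.inj hc))
  have adjr : ∀ (i : ZMod n) (a : ℕ), a ∈ ({2, n/2} : Finset ℕ) → (a : ZMod n) ≠ 0 →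
      (Gamma n {2, n / 2} {2, n / 2} {0}).Adj (Sum.inr i) (Sum.inr (i + (a : ZMod n))) := by
    intro i a ha h0
    rw [Gamma, SimpleGraph.fromRel_adj]
    refine ⟨?_, Or.inl ⟨a, ha, rfl⟩⟩
    intro hc
    exact h0 (left_eq_add.mp (Sum.inr.inj hc))
  have adjc : ∀ (i : ZMod n),
      (Gamma n {2, n / 2} {2, n / 2} {0}).Adj (Sum.inl i) (Sum.inr i) := by
    intro i
    rw [Gamma, SimpleGraph.fromRel_adj]
    exact ⟨Sum.inl_ne_inr, Or.inl ⟨0, by simp, by simp⟩⟩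
  have hA2 : (2:ℕ) ∈ ({2, n/2} : Finset ℕ) := by simp
  have hAm : (n/2) ∈ ({2, n/2} : Finset ℕ) := by simp
  have c2ne : ((2:ℕ) : ZMod n) ≠ 0 := by
    have := vne 2 0 (by omega) (by omega) (by omega); simpa using this
  have cmne : ((n/2:ℕ) : ZMod n) ≠ 0 := by
    have := vne (n/2) 0 (by omega) (by omega) (by omega); simpa using this
  have zne2 : ∀ b : ℕ, b < n → b ≠ 0 → ((0:ℕ) : ZMod n) ≠ ((b:ℕ) : ZMod n) :=
    fun b hb hb0 => vne 0 b (by omega) hb (by omega)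
  have zne : ∀ b : ℕ, b < n → b ≠ 0 → (0 : ZMod n) ≠ ((b:ℕ) : ZMod n) := by
    intro b hb hb0
    have := vne 0 b (by omega) hb (by omega); simpa using this
  -- membership characterizations
  have mem_l0 : ∀ j : ZMod n, brMap n (Sum.inl j) = some (Sum.inl 0) ↔ (j ≠ 0 ∧ j.val % 2 = 0) := by
    intro j
    simp only [brMap]
    split_ifs with h1 h2 h3
    · rw [Nat.cast_zero] at h1
      exact iff_of_false (by decide) (by simp [h1])
    · refine iff_of_false (by decide) ?_
      rintro ⟨-, hev⟩
      rcases h2 with h2 | h2 <;> rw [h2] at hev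
      · rw [vv (n/2) (by omega)] at hev; omega
      · rw [vv (n/2+2) (by omega)] at hev; omega
    · rw [Nat.cast_zero] at h1
      exact iff_of_true rfl ⟨h1, h3⟩
    · exact iff_of_false (by simp) (fun hc => h3 hc.2)
  have mem_r2 : ∀ j : ZMod n, brMap n (Sum.inl j) = some (Sum.inr 2) ↔
      (j = ((n/2:ℕ) : ZMod n) ∨ j = ((n/2+2:ℕ) : ZMod n)) := by
    intro j
    simp only [brMap]
    split_ifs with h1 h2 h3
    · rw [Nat.cast_zero] at h1
      refine iff_of_false (by decide) ?_
      rintro (hc | hc) <;> rw [h1] at hc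
      · exact zne (n/2) (by omega) (by omega) hc
      · exact zne (n/2+2) (by omega) (by omega) hc
    · exact iff_of_true rfl h2
    · exact iff_of_false (by decide) h2
    · exact iff_of_false (by simp) h2
  have mem_l2l : ∀ j : ZMod n, brMap n (Sum.inl j) = some (Sum.inl 2) ↔ j = 0 := by
    intro j
    simp only [brMap]
    split_ifs with h1 h2 h3
    · rw [Nat.cast_zero] at h1; exact iff_of_true rfl h1
    · rw [Nat.cast_zero] at h1; exact iff_of_false (by decide) h1
    · rw [Nat.cast_zero] at h1; exact iff_of_false (by decide) h1
    · rw [Nat.cast_zero] at h1; exact iff_of_false (by simp) h1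
  have mem_l2r : ∀ j : ZMod n, brMap n (Sum.inr j) = some (Sum.inl 2) ↔ j = 0 := by
    intro j
    simp only [brMap]
    split_ifs with h1 h2 h3 h4
    · rw [Nat.cast_zero] at h1; exact iff_of_true rfl h1
    · rw [Nat.cast_zero] at h1; exact iff_of_false (by decide) h1
    · rw [Nat.cast_zero] at h1; exact iff_of_false (by decide) h1
    · rw [Nat.cast_zero] at h1; exact iff_of_false (by decide) h1
    · rw [Nat.cast_zero] at h1; exact iff_of_false (by simp) h1
  have mem_l1 : ∀ j : ZMod n, brMap n (Sum.inr j) = some (Sum.inl 1) ↔ j.val % 2 = 1 := by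
    intro j
    simp only [brMap]
    split_ifs with h1 h2 h3 h4
    · refine iff_of_false (by decide) ?_
      rw [h1, vv 0 (by omega)]; omega
    · refine iff_of_false (by decide) ?_
      rw [h2, vv 2 (by omega)]; omega
    · refine iff_of_false (by decide) ?_
      rw [h3, vv (n-2) (by omega)]; omega
    · exact iff_of_true rfl h4
    · exact iff_of_false (by simp) h4
  have mem_ir0 : ∀ j : ZMod n, brMap n (Sum.inr j) = some (Sum.inr 0) ↔ j = ((2:ℕ) : ZMod n) := by
    intro j
    simp only [brMap]
    split_ifs with h1 h2 h3 h4
    · refine iff_of_false (by decide) ?_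
      rw [h1]; exact zne2 2 (by omega) (by omega)
    · exact iff_of_true rfl h2
    · exact iff_of_false (by decide) h2
    · exact iff_of_false (by decide) h2
    · exact iff_of_false (by simp) h2
  have mem_ir1 : ∀ j : ZMod n, brMap n (Sum.inr j) = some (Sum.inr 1) ↔ j = ((n-2:ℕ) : ZMod n) := by
    intro j
    simp only [brMap]
    split_ifs with h1 h2 h3 h4
    · refine iff_of_false (by decide) ?_
      rw [h1]; exact zne2 (n-2) (by omega) (by omega)
    · refine iff_of_false (by decide) ?_
      rw [h2]; exact fun hc => vne 2 (n-2) (by omega) (by omega) (by omega) hc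
    · exact iff_of_true rfl h3
    · exact iff_of_false (by decide) h3
    · exact iff_of_false (by simp) h3
  -- cross emptiness
  have no_r_l0 : ∀ j : ZMod n, brMap n (Sum.inr j) ≠ some (Sum.inl 0) := by
    intro j; simp only [brMap]; split_ifs <;> simp
  have no_l_l1 : ∀ j : ZMod n, brMap n (Sum.inl j) ≠ some (Sum.inl 1) := by
    intro j; simp only [brMap]; split_ifs <;> simp
  have no_l_ir0 : ∀ j : ZMod n, brMap n (Sum.inl j) ≠ some (Sum.inr 0) := by
    intro j; simp only [brMap]; split_ifs <;> simp
  have no_l_ir1 : ∀ j : ZMod n, brMap n (Sum.inl j) ≠ some (Sum.inr 1) := by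
    intro j; simp only [brMap]; split_ifs <;> simp
  have no_r_ir2 : ∀ j : ZMod n, brMap n (Sum.inr j) ≠ some (Sum.inr 2) := by
    intro j; simp only [brMap]; split_ifs <;> simp
  have nzv : ∀ a : ℕ, a < n → a ≠ 0 → ((a:ℕ) : ZMod n) ≠ 0 := by
    intro a ha h0 hc
    exact h0 (by rw [← vv a ha, hc, ZMod.val_zero])
  -- base membership facts
  have hb0 : brMap n (Sum.inl ((2:ℕ) : ZMod n)) = some (Sum.inl 0) :=
    (mem_l0 _).mpr ⟨nzv 2 (by omega) (by omega), by rw [vv 2 (by omega)]⟩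
  have hb1 : brMap n (Sum.inr ((1:ℕ) : ZMod n)) = some (Sum.inl 1) :=
    (mem_l1 _).mpr (by rw [vv 1 (by omega)])
  have hb2 : brMap n (Sum.inl (0 : ZMod n)) = some (Sum.inl 2) := (mem_l2l 0).mpr rfl
  have hbr0 : brMap n (Sum.inr ((2:ℕ) : ZMod n)) = some (Sum.inr 0) := (mem_ir0 _).mpr rfl
  have hbr1 : brMap n (Sum.inr ((n-2:ℕ) : ZMod n)) = some (Sum.inr 1) := (mem_ir1 _).mpr rfl
  have hbr2 : brMap n (Sum.inl ((n/2:ℕ) : ZMod n)) = some (Sum.inr 2) := (mem_r2 _).mpr (Or.inl rfl)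
  have hbr2' : brMap n (Sum.inl ((n/2+2:ℕ) : ZMod n)) = some (Sum.inr 2) := (mem_r2 _).mpr (Or.inr rfl)
  refine ⟨brMap n, ?_, ?_⟩
  · -- connectivity of branch sets
    have conn0 : ((Gamma n {2, n / 2} {2, n / 2} {0}).induce
        {v | brMap n v = some (Sum.inl 0)}).Connected := by
      have reach0 : ∀ k : ℕ, 2*k+2 < n →
          ∀ hm : brMap n (Sum.inl ((2*k+2 : ℕ) : ZMod n)) = some (Sum.inl 0),
          ((Gamma n {2, n / 2} {2, n / 2} {0}).induce
            {v | brMap n v = some (Sum.inl 0)}).Reachable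
            ⟨Sum.inl ((2:ℕ) : ZMod n), hb0⟩ ⟨Sum.inl ((2*k+2 : ℕ) : ZMod n), hm⟩ := by
        intro k
        induction k with
        | zero =>
          intro hk hm
          have he : (⟨Sum.inl ((2*0+2:ℕ) : ZMod n), hm⟩ :
              {v // v ∈ {v | brMap n v = some (Sum.inl 0)}}) =
              ⟨Sum.inl ((2:ℕ) : ZMod n), hb0⟩ := Subtype.ext (by norm_num)
          rw [he]
        | succ k ih =>
          intro hk hm
          have hk' : 2*k+2 < n := by omega
          have hm' : brMap n (Sum.inl ((2*k+2:ℕ) : ZMod n)) = some (Sum.inl 0) :=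
            (mem_l0 _).mpr ⟨nzv _ hk' (by omega), by rw [vv _ hk']; omega⟩
          refine (ih hk' hm').trans (SimpleGraph.Adj.reachable ?_)
          show (Gamma n {2, n / 2} {2, n / 2} {0}).Adj
            (Sum.inl ((2*k+2:ℕ) : ZMod n)) (Sum.inl ((2*(k+1)+2:ℕ) : ZMod n))
          have e : ((2*(k+1)+2:ℕ) : ZMod n) = ((2*k+2:ℕ) : ZMod n) + ((2:ℕ) : ZMod n) := by
            push_cast; ring
          rw [e]; exact adjl _ 2 hA2 c2ne
      have toBase : ∀ x : ↥{v | brMap n v = some (Sum.inl 0)},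
          ((Gamma n {2, n / 2} {2, n / 2} {0}).induce
            {v | brMap n v = some (Sum.inl 0)}).Reachable
            ⟨Sum.inl ((2:ℕ) : ZMod n), hb0⟩ x := by
        rintro ⟨(j|j), hx⟩
        · obtain ⟨hj0, hev⟩ := (mem_l0 j).mp hx
          have hvl : j.val < n := ZMod.val_lt j
          have hv0 : j.val ≠ 0 := fun hc => hj0 ((ZMod.val_eq_zero j).mp hc)
          have ht : 2*(j.val/2-1)+2 = j.val := by omega
          have hj : Sum.inl ((2*(j.val/2-1)+2 : ℕ) : ZMod n) = (Sum.inl j : ZMod n ⊕ ZMod n) := by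
            rw [ht]
            exact congrArg Sum.inl (ZMod.val_injective n (vv j.val hvl))
          have hm' : brMap n (Sum.inl ((2*(j.val/2-1)+2 : ℕ) : ZMod n)) = some (Sum.inl 0) := by
            rw [hj]; exact hx
          have hr := reach0 (j.val/2-1) (by omega) hm'
          have he : (⟨Sum.inl ((2*(j.val/2-1)+2:ℕ) : ZMod n), hm'⟩ :
              {v // v ∈ {v | brMap n v = some (Sum.inl 0)}}) = ⟨Sum.inl j, hx⟩ :=
            Subtype.ext hj
          rwa [he] at hr
        · exact absurd hx (no_r_l0 j)
      have : Nonempty ↥{v | brMap n v = some (Sum.inl 0)} := ⟨⟨_, hb0⟩⟩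
      exact SimpleGraph.Connected.mk (fun x y => (toBase x).symm.trans (toBase y))
    have conn1 : ((Gamma n {2, n / 2} {2, n / 2} {0}).induce
        {v | brMap n v = some (Sum.inl 1)}).Connected := by
      have reach1 : ∀ k : ℕ, 2*k+1 < n →
          ∀ hm : brMap n (Sum.inr ((2*k+1 : ℕ) : ZMod n)) = some (Sum.inl 1),
          ((Gamma n {2, n / 2} {2, n / 2} {0}).induce
            {v | brMap n v = some (Sum.inl 1)}).Reachable
            ⟨Sum.inr ((1:ℕ) : ZMod n), hb1⟩ ⟨Sum.inr ((2*k+1 : ℕ) : ZMod n), hm⟩ := by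
        intro k
        induction k with
        | zero =>
          intro hk hm
          have he : (⟨Sum.inr ((2*0+1:ℕ) : ZMod n), hm⟩ :
              {v // v ∈ {v | brMap n v = some (Sum.inl 1)}}) =
              ⟨Sum.inr ((1:ℕ) : ZMod n), hb1⟩ := Subtype.ext (by norm_num)
          rw [he]
        | succ k ih =>
          intro hk hm
          have hk' : 2*k+1 < n := by omega
          have hm' : brMap n (Sum.inr ((2*k+1:ℕ) : ZMod n)) = some (Sum.inl 1) :=
            (mem_l1 _).mpr (by rw [vv _ hk']; omega)
          refine (ih hk' hm').trans (SimpleGraph.Adj.reachable ?_)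
          show (Gamma n {2, n / 2} {2, n / 2} {0}).Adj
            (Sum.inr ((2*k+1:ℕ) : ZMod n)) (Sum.inr ((2*(k+1)+1:ℕ) : ZMod n))
          have e : ((2*(k+1)+1:ℕ) : ZMod n) = ((2*k+1:ℕ) : ZMod n) + ((2:ℕ) : ZMod n) := by
            push_cast; ring
          rw [e]; exact adjr _ 2 hA2 c2ne
      have toBase : ∀ x : ↥{v | brMap n v = some (Sum.inl 1)},
          ((Gamma n {2, n / 2} {2, n / 2} {0}).induce
            {v | brMap n v = some (Sum.inl 1)}).Reachable
            ⟨Sum.inr ((1:ℕ) : ZMod n), hb1⟩ x := by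
        rintro ⟨(j|j), hx⟩
        · exact absurd hx (no_l_l1 j)
        · have hev := (mem_l1 j).mp hx
          have hvl : j.val < n := ZMod.val_lt j
          have ht : 2*(j.val/2)+1 = j.val := by omega
          have hj : Sum.inr ((2*(j.val/2)+1 : ℕ) : ZMod n) = (Sum.inr j : ZMod n ⊕ ZMod n) := by
            rw [ht]
            exact congrArg Sum.inr (ZMod.val_injective n (vv j.val hvl))
          have hm' : brMap n (Sum.inr ((2*(j.val/2)+1 : ℕ) : ZMod n)) = some (Sum.inl 1) := by
            rw [hj]; exact hx
          have hr := reach1 (j.val/2) (by omega) hm'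
          have he : (⟨Sum.inr ((2*(j.val/2)+1:ℕ) : ZMod n), hm'⟩ :
              {v // v ∈ {v | brMap n v = some (Sum.inl 1)}}) = ⟨Sum.inr j, hx⟩ :=
            Subtype.ext hj
          rwa [he] at hr
      have : Nonempty ↥{v | brMap n v = some (Sum.inl 1)} := ⟨⟨_, hb1⟩⟩
      exact SimpleGraph.Connected.mk (fun x y => (toBase x).symm.trans (toBase y))
    have conn2 : ((Gamma n {2, n / 2} {2, n / 2} {0}).induce
        {v | brMap n v = some (Sum.inl 2)}).Connected := by
      have hb2' : brMap n (Sum.inr (0 : ZMod n)) = some (Sum.inl 2) := (mem_l2r 0).mpr rfl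
      have toBase : ∀ x : ↥{v | brMap n v = some (Sum.inl 2)},
          ((Gamma n {2, n / 2} {2, n / 2} {0}).induce
            {v | brMap n v = some (Sum.inl 2)}).Reachable ⟨Sum.inl (0 : ZMod n), hb2⟩ x := by
        rintro ⟨(j|j), hx⟩
        · have hj := (mem_l2l j).mp hx
          have he : (⟨Sum.inl (0:ZMod n), hb2⟩ :
              {v // v ∈ {v | brMap n v = some (Sum.inl 2)}}) = ⟨Sum.inl j, hx⟩ :=
            Subtype.ext (congrArg Sum.inl hj.symm)
          rw [← he]
        · have hj := (mem_l2r j).mp hx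
          subst hj
          exact SimpleGraph.Adj.reachable (by exact adjc 0)
      have : Nonempty ↥{v | brMap n v = some (Sum.inl 2)} := ⟨⟨_, hb2⟩⟩
      exact SimpleGraph.Connected.mk (fun x y => (toBase x).symm.trans (toBase y))
    have connr0 : ((Gamma n {2, n / 2} {2, n / 2} {0}).induce
        {v | brMap n v = some (Sum.inr 0)}).Connected := by
      have toBase : ∀ x : ↥{v | brMap n v = some (Sum.inr 0)},
          ((Gamma n {2, n / 2} {2, n / 2} {0}).induce
            {v | brMap n v = some (Sum.inr 0)}).Reachable ⟨Sum.inr ((2:ℕ) : ZMod n), hbr0⟩ x := by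
        rintro ⟨(j|j), hx⟩
        · exact absurd hx (no_l_ir0 j)
        · have hj := (mem_ir0 j).mp hx
          have he : (⟨Sum.inr ((2:ℕ):ZMod n), hbr0⟩ :
              {v // v ∈ {v | brMap n v = some (Sum.inr 0)}}) = ⟨Sum.inr j, hx⟩ :=
            Subtype.ext (congrArg Sum.inr hj.symm)
          rw [← he]
      have : Nonempty ↥{v | brMap n v = some (Sum.inr 0)} := ⟨⟨_, hbr0⟩⟩
      exact SimpleGraph.Connected.mk (fun x y => (toBase x).symm.trans (toBase y))
    have connr1 : ((Gamma n {2, n / 2} {2, n / 2} {0}).induce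
        {v | brMap n v = some (Sum.inr 1)}).Connected := by
      have toBase : ∀ x : ↥{v | brMap n v = some (Sum.inr 1)},
          ((Gamma n {2, n / 2} {2, n / 2} {0}).induce
            {v | brMap n v = some (Sum.inr 1)}).Reachable
            ⟨Sum.inr ((n-2:ℕ) : ZMod n), hbr1⟩ x := by
        rintro ⟨(j|j), hx⟩
        · exact absurd hx (no_l_ir1 j)
        · have hj := (mem_ir1 j).mp hx
          have he : (⟨Sum.inr ((n-2:ℕ):ZMod n), hbr1⟩ :
              {v // v ∈ {v | brMap n v = some (Sum.inr 1)}}) = ⟨Sum.inr j, hx⟩ :=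
            Subtype.ext (congrArg Sum.inr hj.symm)
          rw [← he]
      have : Nonempty ↥{v | brMap n v = some (Sum.inr 1)} := ⟨⟨_, hbr1⟩⟩
      exact SimpleGraph.Connected.mk (fun x y => (toBase x).symm.trans (toBase y))
    have connr2 : ((Gamma n {2, n / 2} {2, n / 2} {0}).induce
        {v | brMap n v = some (Sum.inr 2)}).Connected := by
      have toBase : ∀ x : ↥{v | brMap n v = some (Sum.inr 2)},
          ((Gamma n {2, n / 2} {2, n / 2} {0}).induce
            {v | brMap n v = some (Sum.inr 2)}).Reachable
            ⟨Sum.inl ((n/2:ℕ) : ZMod n), hbr2⟩ x := by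
        rintro ⟨(j|j), hx⟩
        · rcases (mem_r2 j).mp hx with hj | hj
          · have he : (⟨Sum.inl ((n/2:ℕ):ZMod n), hbr2⟩ :
                {v // v ∈ {v | brMap n v = some (Sum.inr 2)}}) = ⟨Sum.inl j, hx⟩ :=
              Subtype.ext (congrArg Sum.inl hj.symm)
            rw [← he]
          · subst hj
            refine SimpleGraph.Adj.reachable ?_
            show (Gamma n {2, n / 2} {2, n / 2} {0}).Adj
              (Sum.inl ((n/2:ℕ) : ZMod n)) (Sum.inl ((n/2+2:ℕ) : ZMod n))
            have e : ((n/2+2:ℕ) : ZMod n) = ((n/2:ℕ) : ZMod n) + ((2:ℕ) : ZMod n) := by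
              push_cast; ring
            rw [e]; exact adjl _ 2 hA2 c2ne
        · exact absurd hx (no_r_ir2 j)
      have : Nonempty ↥{v | brMap n v = some (Sum.inr 2)} := ⟨⟨_, hbr2⟩⟩
      exact SimpleGraph.Connected.mk (fun x y => (toBase x).symm.trans (toBase y))
    intro w
    rcases w with w | w <;> fin_cases w
    · exact conn0
    · exact conn1
    · exact conn2
    · exact connr0
    · exact connr1
    · exact connr2
  · -- adjacency witnesses
    have wit : ∀ a b : Fin 3, ∃ v₁ v₂, brMap n v₁ = some (Sum.inl a) ∧
        brMap n v₂ = some (Sum.inr b) ∧ (Gamma n {2, n / 2} {2, n / 2} {0}).Adj v₁ v₂ := by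
      intro a b
      fin_cases a <;> fin_cases b
      · -- (0,0) : inl 2 — inr 2
        exact ⟨Sum.inl ((2:ℕ) : ZMod n), Sum.inr ((2:ℕ) : ZMod n), hb0, hbr0, adjc _⟩
      · -- (0,1) : inl (n-2) — inr (n-2)
        refine ⟨Sum.inl ((n-2:ℕ) : ZMod n), Sum.inr ((n-2:ℕ) : ZMod n), ?_, hbr1, adjc _⟩
        exact (mem_l0 _).mpr ⟨nzv _ (by omega) (by omega), by rw [vv _ (by omega)]; omega⟩
      · -- (0,2) : inl 2 — inl (n/2+2)
        refine ⟨Sum.inl ((2:ℕ) : ZMod n), Sum.inl ((n/2+2:ℕ) : ZMod n), hb0, hbr2', ?_⟩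
        have e : ((n/2+2:ℕ) : ZMod n) = ((2:ℕ) : ZMod n) + ((n/2:ℕ) : ZMod n) := by
          push_cast; ring
        rw [e]; exact adjl _ (n/2) hAm cmne
      · -- (1,0) : inr (n/2+2) — inr 2
        refine ⟨Sum.inr ((n/2+2:ℕ) : ZMod n), Sum.inr ((2:ℕ) : ZMod n), ?_, hbr0, ?_⟩
        · exact (mem_l1 _).mpr (by rw [vv _ (by omega)]; omega)
        · have e : ((2:ℕ) : ZMod n) = ((n/2+2:ℕ) : ZMod n) + ((n/2:ℕ) : ZMod n) := by
            rw [← Nat.cast_add]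
            have h2 : n/2+2+n/2 = n+2 := by omega
            rw [h2]; push_cast [ZMod.natCast_self]; ring
          rw [e]; exact adjr _ (n/2) hAm cmne
      · -- (1,1) : inr (n/2-2) — inr (n-2)
        refine ⟨Sum.inr ((n/2-2:ℕ) : ZMod n), Sum.inr ((n-2:ℕ) : ZMod n), ?_, hbr1, ?_⟩
        · exact (mem_l1 _).mpr (by rw [vv _ (by omega)]; omega)
        · have e : ((n-2:ℕ) : ZMod n) = ((n/2-2:ℕ) : ZMod n) + ((n/2:ℕ) : ZMod n) := by
            rw [← Nat.cast_add]; congr 1; omega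
          rw [e]; exact adjr _ (n/2) hAm cmne
      · -- (1,2) : inr (n/2) — inl (n/2)
        refine ⟨Sum.inr ((n/2:ℕ) : ZMod n), Sum.inl ((n/2:ℕ) : ZMod n), ?_, hbr2, ?_⟩
        · exact (mem_l1 _).mpr (by rw [vv _ (by omega)]; omega)
        · exact (adjc _).symm
      · -- (2,0) : inr 0 — inr 2
        refine ⟨Sum.inr (0 : ZMod n), Sum.inr ((2:ℕ) : ZMod n), (mem_l2r 0).mpr rfl, hbr0, ?_⟩
        have e : ((2:ℕ) : ZMod n) = (0 : ZMod n) + ((2:ℕ) : ZMod n) := (zero_add _).symm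
        rw [e]; exact adjr _ 2 hA2 c2ne
      · -- (2,1) : inr 0 — inr (n-2)
        refine ⟨Sum.inr (0 : ZMod n), Sum.inr ((n-2:ℕ) : ZMod n), (mem_l2r 0).mpr rfl, hbr1, ?_⟩
        have e : (0 : ZMod n) = ((n-2:ℕ) : ZMod n) + ((2:ℕ) : ZMod n) := by
          rw [← Nat.cast_add]
          have h2 : n-2+2 = n := by omega
          rw [h2, ZMod.natCast_self]
        exact (e ▸ adjr ((n-2:ℕ) : ZMod n) 2 hA2 c2ne).symm
      · -- (2,2) : inl 0 — inl (n/2)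
        refine ⟨Sum.inl (0 : ZMod n), Sum.inl ((n/2:ℕ) : ZMod n), hb2, hbr2, ?_⟩
        have e : ((n/2:ℕ) : ZMod n) = (0 : ZMod n) + ((n/2:ℕ) : ZMod n) := (zero_add _).symm
        rw [e]; exact adjl _ (n/2) hAm cmne
    intro w₁ w₂ hadj
    rcases w₁ with a | a <;> rcases w₂ with b | b
    · simp [completeBipartiteGraph] at hadj
    · obtain ⟨v₁, v₂, m1, m2, ha⟩ := wit a b
      exact ⟨v₁, v₂, m1, m2, ha⟩
    · obtain ⟨v₁, v₂, m1, m2, ha⟩ := wit b a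
      exact ⟨v₂, v₁, m2, m1, ha.symm⟩
    · simp [completeBipartiteGraph] at hadj

theorem stmt8 (n : ℕ) (hn : 4 ≤ n) (h : n % 4 = 2) :
    ¬ (Gamma n {2, n / 2} {2, n / 2} {0}).Planar := by
  rintro ⟨-, h33⟩
  exact h33 (key n hn h)
end

section
/- For all n ≥ 4 divisible by 4, the graph Γ_n(∅, ∅, {0, n/4, n/2, 3n/4}) is non-planar; indeed, the induced subgraph on vertices v_0, v_{n/4}, v_{n/2}, v'_0, v'_{n/4}, v'_{n/2} is isomorphic to the complete bipartite graph K_{3,3}. -/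
def gfun (n m : ℕ) (a : Fin 3) : ZMod n := ((m * (a : ℕ) : ℕ) : ZMod n)

def idxf (n m : ℕ) (x : ZMod n) : Fin 3 :=
  if x = 0 then 0 else if x = ((m : ℕ) : ZMod n) then 1 else 2

def ff (n m : ℕ) : ZMod n ⊕ ZMod n → Option (Fin 3 ⊕ Fin 3)
  | Sum.inl i => if i = 0 then some (Sum.inl 0) else if i = ((m : ℕ) : ZMod n) then some (Sum.inl 1)
      else if i = ((2 * m : ℕ) : ZMod n) then some (Sum.inl 2) else none
  | Sum.inr i => if i = 0 then some (Sum.inr 0) else if i = ((m : ℕ) : ZMod n) then some (Sum.inr 1)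
      else if i = ((2 * m : ℕ) : ZMod n) then some (Sum.inr 2) else none

theorem conn_singleton {V : Type*} (G : SimpleGraph V) (a : V) : (G.induce {a}).Connected := by
  rw [SimpleGraph.connected_iff]
  refine ⟨fun u v => ?_, ⟨⟨a, rfl⟩⟩⟩
  have hu := Set.mem_singleton_iff.mp u.2
  have hv := Set.mem_singleton_iff.mp v.2
  have huv : u = v := Subtype.ext (hu.trans hv.symm)
  exact huv ▸ SimpleGraph.Reachable.refl _

theorem gadj (m : ℕ) (a b : Fin 3) :
    (Gamma (4*m) ∅ ∅ {0, m, 2*m, 3*m}).Adj (Sum.inl (gfun (4*m) m a)) (Sum.inr (gfun (4*m) m b)) := by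
  have hn0 : ((4*m : ℕ) : ZMod (4*m)) = 0 := ZMod.natCast_self _
  push_cast at hn0
  rw [Gamma, SimpleGraph.fromRel_adj]
  refine ⟨by simp, Or.inl ?_⟩
  fin_cases a <;> fin_cases b
  · exact ⟨0, by simp, by push_cast [gfun]; ring⟩
  · exact ⟨m, by simp, by push_cast [gfun]; ring⟩
  · exact ⟨2*m, by simp, by push_cast [gfun]; ring⟩
  · exact ⟨3*m, by simp, by push_cast [gfun]; linear_combination -hn0⟩
  · exact ⟨0, by simp, by push_cast [gfun]; ring⟩
  · exact ⟨m, by simp, by push_cast [gfun]; ring⟩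
  · exact ⟨2*m, by simp, by push_cast [gfun]; linear_combination -hn0⟩
  · exact ⟨3*m, by simp, by push_cast [gfun]; linear_combination -hn0⟩
  · exact ⟨0, by simp, by push_cast [gfun]; ring⟩

section main
variable (m : ℕ) (hm : 0 < m)

example : True := trivial

-- distinctness
theorem dM0 (hm : 0 < m) : ((m : ℕ) : ZMod (4*m)) ≠ 0 := by
  rw [Ne, ZMod.natCast_eq_zero_iff]
  intro h; have := Nat.le_of_dvd hm h; omega

theorem d2M0 (hm : 0 < m) : ((2*m : ℕ) : ZMod (4*m)) ≠ 0 := by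
  rw [Ne, ZMod.natCast_eq_zero_iff]
  intro h; have := Nat.le_of_dvd (by omega) h; omega

theorem dM2M (hm : 0 < m) : ((m : ℕ) : ZMod (4*m)) ≠ ((2*m : ℕ) : ZMod (4*m)) := by
  haveI : NeZero (4*m) := ⟨by omega⟩
  intro h
  have h1 := ZMod.val_natCast_of_lt (show m < 4*m by omega)
  have h2 := ZMod.val_natCast_of_lt (show 2*m < 4*m by omega)
  rw [h, h2] at h1; omega

theorem d2M0' (hm : 0 < m) : ((m : ℕ) : ZMod (4*m)) * 2 ≠ 0 := by
  intro h; apply d2M0 m hm; push_cast; linear_combination h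

theorem dM2M' (hm : 0 < m) : ((m : ℕ) : ZMod (4*m)) * 2 ≠ ((m : ℕ) : ZMod (4*m)) := by
  intro h; apply dM2M m hm; push_cast; linear_combination -h

theorem hg0 : gfun (4*m) m 0 = 0 := by simp [gfun]
theorem hg1 : gfun (4*m) m 1 = ((m : ℕ) : ZMod (4*m)) := by simp [gfun]
theorem hg2 : gfun (4*m) m 2 = ((2*m : ℕ) : ZMod (4*m)) := by
  simp [gfun, Nat.mul_comm]

theorem hidx (hm : 0 < m) : ∀ a : Fin 3, idxf (4*m) m (gfun (4*m) m a) = a := by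
  intro a
  fin_cases a <;>
    simp [idxf, gfun, dM0 m hm, d2M0 m hm, (dM2M m hm).symm, d2M0' m hm, dM2M' m hm, Nat.mul_comm]

theorem hffl (hm : 0 < m) (a : Fin 3) :
    ff (4*m) m (Sum.inl (gfun (4*m) m a)) = some (Sum.inl a) := by
  fin_cases a <;>
    simp [ff, gfun, dM0 m hm, d2M0 m hm, (dM2M m hm).symm, d2M0' m hm, dM2M' m hm, Nat.mul_comm]

theorem hffr (hm : 0 < m) (a : Fin 3) :
    ff (4*m) m (Sum.inr (gfun (4*m) m a)) = some (Sum.inr a) := by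
  fin_cases a <;>
    simp [ff, gfun, dM0 m hm, d2M0 m hm, (dM2M m hm).symm, d2M0' m hm, dM2M' m hm, Nat.mul_comm]

theorem branchset (hm : 0 < m) (w : Fin 3 ⊕ Fin 3) :
    {v | ff (4*m) m v = some w} = {Sum.map (gfun (4*m) m) (gfun (4*m) m) w} := by
  have H1 := hffl m hm; have H2 := hffr m hm
  rcases w with a | a <;> fin_cases a <;>
    · ext v
      simp only [Set.mem_setOf_eq, Set.mem_singleton_iff, Sum.map]
      constructor
      · rcases v with i | i <;> simp only [ff] <;> split_ifs with h1 h2 h3 <;>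
          simp_all [gfun, Nat.mul_comm]
      · rintro rfl
        first | exact H1 _ | exact H2 _

theorem gadj' (hm : 0 < m) :
    ∀ i ∈ ({0, ((m:ℕ) : ZMod (4*m)), ((2*m:ℕ) : ZMod (4*m))} : Set (ZMod (4*m))),
    ∀ j ∈ ({0, ((m:ℕ) : ZMod (4*m)), ((2*m:ℕ) : ZMod (4*m))} : Set (ZMod (4*m))),
      (Gamma (4*m) ∅ ∅ {0, m, 2*m, 3*m}).Adj (Sum.inl i) (Sum.inr j) := by
  intro i hi j hj
  simp only [Set.mem_insert_iff, Set.mem_singleton_iff] at hi hj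
  rcases hi with rfl | rfl | rfl <;> rcases hj with rfl | rfl | rfl <;>
    first
    | simpa [hg0, hg1, hg2] using gadj m 0 0
    | simpa [hg0, hg1, hg2] using gadj m 0 1
    | simpa [hg0, hg1, hg2] using gadj m 0 2
    | simpa [hg0, hg1, hg2] using gadj m 1 0
    | simpa [hg0, hg1, hg2] using gadj m 1 1
    | simpa [hg0, hg1, hg2] using gadj m 1 2
    | simpa [hg0, hg1, hg2] using gadj m 2 0
    | simpa [hg0, hg1, hg2] using gadj m 2 1
    | simpa [hg0, hg1, hg2] using gadj m 2 2

noncomputable def isoK33 (hm : 0 < m) :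
    ((Gamma (4*m) ∅ ∅ {0, m, 2*m, 3*m}).induce
        {Sum.inl (0 : ZMod (4*m)), Sum.inl ((m : ℕ) : ZMod (4*m)), Sum.inl ((2*m : ℕ) : ZMod (4*m)),
         Sum.inr (0 : ZMod (4*m)), Sum.inr ((m : ℕ) : ZMod (4*m)), Sum.inr ((2*m : ℕ) : ZMod (4*m))})
      ≃g completeBipartiteGraph (Fin 3) (Fin 3) := by
  refine ⟨⟨fun x => Sum.map (idxf (4*m) m) (idxf (4*m) m) x.1,
    fun w => ⟨Sum.map (gfun (4*m) m) (gfun (4*m) m) w,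
      by rcases w with a | a <;> fin_cases a <;> simp [gfun, Nat.mul_comm]⟩, ?_, ?_⟩, ?_⟩
  · rintro ⟨x, hx⟩
    apply Subtype.ext
    simp only [Set.mem_insert_iff, Set.mem_singleton_iff] at hx
    rcases hx with rfl | rfl | rfl | rfl | rfl | rfl <;>
      simp [Sum.map, idxf, gfun, dM0 m hm, d2M0 m hm, (dM2M m hm).symm, d2M0' m hm,
        dM2M' m hm, Nat.mul_comm]
  · intro w
    rcases w with a | a <;> simp [Sum.map, hidx m hm]
  · rintro ⟨x, hx⟩ ⟨y, hy⟩
    simp only [Set.mem_insert_iff, Set.mem_singleton_iff] at hx hy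
    rcases x with i | i <;> rcases y with j | j
    · simp [Gamma, SimpleGraph.fromRel_adj, SimpleGraph.comap_adj, completeBipartiteGraph_adj,
        Sum.map]
    · refine iff_of_true (by simp [Sum.map, completeBipartiteGraph_adj]) ?_
      show (Gamma (4*m) ∅ ∅ {0, m, 2*m, 3*m}).Adj (Sum.inl i) (Sum.inr j)
      apply gadj' m hm <;> simp_all
    · refine iff_of_true (by simp [Sum.map, completeBipartiteGraph_adj]) ?_
      show (Gamma (4*m) ∅ ∅ {0, m, 2*m, 3*m}).Adj (Sum.inr i) (Sum.inl j)
      exact (gadj' m hm j (by simp_all) i (by simp_all)).symm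
    · simp [Gamma, SimpleGraph.fromRel_adj, SimpleGraph.comap_adj, completeBipartiteGraph_adj,
        Sum.map]

end main


theorem stmt9 (n : ℕ) (hn : 4 ≤ n) (h4 : 4 ∣ n) :
    ¬ (Gamma n ∅ ∅ {0, n / 4, n / 2, 3 * n / 4}).Planar ∧
    Nonempty (((Gamma n ∅ ∅ {0, n / 4, n / 2, 3 * n / 4}).induce
        {Sum.inl (0 : ZMod n), Sum.inl ((n / 4 : ℕ) : ZMod n), Sum.inl ((n / 2 : ℕ) : ZMod n),
         Sum.inr (0 : ZMod n), Sum.inr ((n / 4 : ℕ) : ZMod n), Sum.inr ((n / 2 : ℕ) : ZMod n)})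
      ≃g completeBipartiteGraph (Fin 3) (Fin 3)) := by
  obtain ⟨m, rfl⟩ := h4
  have hm : 0 < m := by omega
  have e1 : 4 * m / 4 = m := by omega
  have e2 : 4 * m / 2 = 2 * m := by omega
  have e3 : 3 * (4 * m) / 4 = 3 * m := by omega
  rw [e1, e2, e3]
  constructor
  · rintro ⟨-, h33⟩
    apply h33
    refine ⟨ff (4 * m) m, ?_, ?_⟩
    · intro w; rw [branchset m hm w]; exact conn_singleton _ _
    · intro w₁ w₂ hadj
      rcases w₁ with a | a <;> rcases w₂ with b | b <;> simp [completeBipartiteGraph_adj] at hadj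
      · exact ⟨Sum.inl (gfun (4 * m) m a), Sum.inr (gfun (4 * m) m b),
          hffl m hm a, hffr m hm b, gadj m a b⟩
      · exact ⟨Sum.inr (gfun (4 * m) m a), Sum.inl (gfun (4 * m) m b),
          hffr m hm a, hffl m hm b, (gadj m b a).symm⟩
  · exact ⟨isoK33 m hm⟩
end

section
/- For all n ≥ 6 divisible by 6, the graph Γ_n(∅, ∅, {0, n/3, n/2, 2n/3}) is non-planar; indeed, the induced subgraph on vertices v_0, v_{n/3}, v_{2n/3}, v'_0, v'_{n/3}, v'_{2n/3} is isomorphic to K_{3,3}. -/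
/-!
The additive map `ZMod 3 → ZMod n`, `x ↦ x · (n/3)`, is injective and its image `{0, n/3, 2n/3}`
is a subgroup, so the difference of any two of its values lies in `Q = {0, n/3, n/2, 2n/3}`.
Hence `v_i v'_j` is an edge for all `i, j` in the image, and since `A = B = ∅` there are no edges
inside either side: the six vertices induce `K_{3,3}`. A subgraph is a minor (take singleton
branch sets), so Wagner's criterion fails.
-/

open Function

namespace SimpleGraph

theorem IsContained.isMinorOf {W V : Type*} {H : SimpleGraph W} {G : SimpleGraph V}
    (h : H ⊑ G) : H.IsMinorOf G := by
  obtain ⟨φ⟩ := h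
  refine ⟨partialInv φ, fun w => ?_, fun w₁ w₂ hw =>
    ⟨φ w₁, φ w₂, partialInv_left φ.injective _, partialInv_left φ.injective _, φ.toHom.map_adj hw⟩⟩
  have hbranch : {v | partialInv φ v = some w} = {φ w} :=
    Set.ext fun v => φ.injective.isPartialInv w v |>.trans eq_comm
  rw [hbranch, induce_singleton_eq_top]
  exact connected_top

theorem not_planar_of_completeBipartite_isContained {V : Type*} {G : SimpleGraph V}
    (h : completeBipartiteGraph (Fin 3) (Fin 3) ⊑ G) : ¬ G.Planar :=
  fun hG => hG.2 h.isMinorOf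

end SimpleGraph

namespace Gamma

variable {n : ℕ} {A B Q : Finset ℕ} {i j : ZMod n}

@[simp]
theorem adj_inl_inr : (Gamma n A B Q).Adj (.inl i) (.inr j) ↔ ∃ q ∈ Q, j = i + q := by
  simp [Gamma]

@[simp]
theorem not_adj_inl_inl : ¬ (Gamma n ∅ B Q).Adj (.inl i) (.inl j) := by
  simp [Gamma]

@[simp]
theorem not_adj_inr_inr : ¬ (Gamma n A ∅ Q).Adj (.inr i) (.inr j) := by
  simp [Gamma]

def completeBipartiteEmbedding {α β : Type*} (f : α ↪ ZMod n) (g : β ↪ ZMod n)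
    (hQ : ∀ a b, ∃ q ∈ Q, g b = f a + q) : completeBipartiteGraph α β ↪g Gamma n ∅ ∅ Q where
  toEmbedding := f.sumMap g
  map_rel_iff' := by
    rintro (a | b) (a' | b')
    · simp
    · simpa using hQ a b'
    · simpa [SimpleGraph.adj_comm] using hQ a' b
    · simp

theorem range_completeBipartiteEmbedding {α β : Type*} (f : α ↪ ZMod n) (g : β ↪ ZMod n)
    (hQ : ∀ a b, ∃ q ∈ Q, g b = f a + q) :
    Set.range (completeBipartiteEmbedding f g hQ) =
      Sum.inl '' Set.range f ∪ Sum.inr '' Set.range g := by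
  ext (v | v) <;> simp [completeBipartiteEmbedding]

end Gamma

namespace ZMod

/-- For `d ∣ n`, the map `x ↦ x · (n / d)` from `ZMod d` onto the subgroup of order `d` of
`ZMod n`. -/
def scaleHom (n d : ℕ) (hd : d ∣ n) : ZMod d →+ ZMod n :=
  ZMod.lift d ⟨zmultiplesHom _ ((n / d : ℕ) : ZMod n), by
    simp [← Nat.cast_mul, Nat.mul_div_cancel' hd]⟩

theorem scaleHom_apply {n d : ℕ} [NeZero d] (hd : d ∣ n) (x : ZMod d) :
    scaleHom n d hd x = ((x.val * (n / d) : ℕ) : ZMod n) := by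
  conv_lhs => rw [← ZMod.natCast_zmod_val x, ← Int.cast_natCast]
  rw [scaleHom, lift_coe]
  simp

theorem range_scaleHom {n d : ℕ} [NeZero d] (hd : d ∣ n) :
    Set.range (scaleHom n d hd) = (fun k => ((k * (n / d) : ℕ) : ZMod n)) '' Set.Iio d := by
  ext v
  constructor
  · rintro ⟨x, rfl⟩
    exact ⟨x.val, x.val_lt, (scaleHom_apply hd x).symm⟩
  · rintro ⟨k, hk, rfl⟩
    exact ⟨k, by rw [scaleHom_apply, ZMod.val_cast_of_lt hk]⟩

theorem scaleHom_injective {n d : ℕ} (hd : d ∣ n) (hn : n ≠ 0) :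
    Injective (scaleHom n d hd) := by
  refine (ZMod.lift_injective d).mpr fun m hm => ?_
  simp only [zmultiplesHom_apply, zsmul_eq_mul] at hm
  obtain ⟨e, rfl⟩ := hd
  have he : e ≠ 0 := right_ne_zero_of_mul hn
  rw [Nat.mul_div_cancel_left e (Nat.pos_of_ne_zero (left_ne_zero_of_mul hn))] at hm
  have hdvd : ((d * e : ℕ) : ℤ) ∣ m * e := by
    rw [← ZMod.intCast_zmod_eq_zero_iff_dvd]
    simpa using hm
  push_cast at hdvd
  exact (ZMod.intCast_zmod_eq_zero_iff_dvd m d).mpr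
    (Int.dvd_of_mul_dvd_mul_right (by exact_mod_cast he) hdvd)

end ZMod

theorem stmt10 (n : ℕ) (hn : 6 ≤ n) (h6 : 6 ∣ n) :
    ¬ (Gamma n ∅ ∅ {0, n / 3, n / 2, 2 * n / 3}).Planar ∧
    Nonempty (((Gamma n ∅ ∅ {0, n / 3, n / 2, 2 * n / 3}).induce
        {Sum.inl (0 : ZMod n), Sum.inl ((n / 3 : ℕ) : ZMod n), Sum.inl ((2 * n / 3 : ℕ) : ZMod n),
         Sum.inr (0 : ZMod n), Sum.inr ((n / 3 : ℕ) : ZMod n), Sum.inr ((2 * n / 3 : ℕ) : ZMod n)})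
      ≃g completeBipartiteGraph (Fin 3) (Fin 3)) := by
  have h3 : 3 ∣ n := (Nat.dvd_mul_right 3 2).trans h6
  set ψ := ZMod.scaleHom n 3 h3
  have hψ_inj : Injective ψ := ZMod.scaleHom_injective h3 (by omega)
  have hψ_range : Set.range ψ = {0, ((n / 3 : ℕ) : ZMod n), ((2 * n / 3 : ℕ) : ZMod n)} := by
    rw [ZMod.range_scaleHom, show Set.Iio 3 = {0, 1, 2} by ext; simp; omega]
    simp [Set.image_insert_eq, Nat.mul_div_assoc 2 h3]
  have hQ : ∀ x y : ZMod 3, ∃ q ∈ ({0, n / 3, n / 2, 2 * n / 3} : Finset ℕ), ψ y = ψ x + q := by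
    intro x y
    refine ⟨(y - x).val * (n / 3), ?_, ?_⟩
    · have := (y - x).val_lt
      interval_cases (y - x).val <;> simp
      omega
    · rw [← ZMod.scaleHom_apply h3, ← map_add, add_sub_cancel]
  -- `ZMod 3` is definitionally `Fin 3`, so `φ` embeds the `K_{3,3}` of the statement.
  let φ := Gamma.completeBipartiteEmbedding ⟨ψ, hψ_inj⟩ ⟨ψ, hψ_inj⟩ hQ
  have hrange : {Sum.inl (0 : ZMod n), Sum.inl ((n / 3 : ℕ) : ZMod n),
      Sum.inl ((2 * n / 3 : ℕ) : ZMod n), Sum.inr (0 : ZMod n), Sum.inr ((n / 3 : ℕ) : ZMod n),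
      Sum.inr ((2 * n / 3 : ℕ) : ZMod n)} = Set.range φ := by
    rw [Gamma.range_completeBipartiteEmbedding]
    simp only [Embedding.coeFn_mk, hψ_range, Set.image_insert_eq, Set.image_singleton,
      Set.insert_union, Set.singleton_union]
  refine ⟨SimpleGraph.not_planar_of_completeBipartite_isContained φ.isContained, ?_⟩
  rw [hrange]
  exact ⟨φ.isoInduceRange.symm⟩
end
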